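/- arXiv:1502.03498 — 6 statements merged into one kernel-verified Lean document; each statement's English description precedes it below -/
import Mathlib

section
/- Suppose X₁, …, X_d ∈ M_n(ℂ) are Hermitian, λ ∈ ℝ^d, and ε ≥ 0. If there is a unit vector v ∈ ℂⁿ with ‖X_j v − λ_j v‖ ≤ ε for all j, then B_λ(X₁,…,X_d) is singular or satisfies ‖(B_λ(X₁,…,X_d))⁻¹‖⁻¹ ≤ √( √g · d · ε² + Σ_{j≠k} ‖[X_j, X_k]‖ ), where g is the size of the chosen Clifford matrices and the sum is over ordered pairs j ≠ k. -/
open Matrix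
open scoped Kronecker Matrix.Norms.L2Operator InnerProductSpace

noncomputable def tens {n g : ℕ} (a : EuclideanSpace ℂ (Fin n)) (b : EuclideanSpace ℂ (Fin g)) :
    EuclideanSpace ℂ (Fin n × Fin g) :=
  (WithLp.equiv 2 _).symm (fun p => a p.1 * b p.2)

lemma inner_tens {n g : ℕ} (a c : EuclideanSpace ℂ (Fin n)) (b d : EuclideanSpace ℂ (Fin g)) :
    ⟪tens a b, tens c d⟫_ℂ = ⟪a, c⟫_ℂ * ⟪b, d⟫_ℂ := by
  simp only [tens, PiLp.inner_apply, RCLike.inner_apply, WithLp.equiv_symm_apply, PiLp.toLp_apply,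
    Finset.sum_mul_sum]
  rw [Fintype.sum_prod_type]
  apply Finset.sum_congr rfl; intro i _
  apply Finset.sum_congr rfl; intro s _
  simp only [_root_.map_mul]; ring

lemma kron_tens {n g : ℕ} (A : Matrix (Fin n) (Fin n) ℂ) (B : Matrix (Fin g) (Fin g) ℂ)
    (a : EuclideanSpace ℂ (Fin n)) (b : EuclideanSpace ℂ (Fin g)) :
    toEuclideanLin (A ⊗ₖ B) (tens a b) = tens (toEuclideanLin A a) (toEuclideanLin B b) := by
  simp only [toEuclideanLin_apply, tens, Equiv.apply_symm_apply]
  congr 1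
  funext p
  simp only [mulVec, dotProduct, Fintype.sum_prod_type, kroneckerMap_apply,
    WithLp.equiv_symm_apply, PiLp.toLp_apply, WithLp.equiv_apply, Finset.sum_mul_sum]
  apply Finset.sum_congr rfl; intro i _
  apply Finset.sum_congr rfl; intro s _
  ring

lemma toEuclideanLin_mul_apply {m : Type*} [Fintype m] [DecidableEq m] (M N : Matrix m m ℂ)
    (x : EuclideanSpace ℂ m) :
    toEuclideanLin (M * N) x = toEuclideanLin M (toEuclideanLin N x) := by
  simp [toEuclideanLin_apply, Equiv.apply_symm_apply, mulVec_mulVec]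

lemma toEuclideanLin_one_apply {m : Type*} [Fintype m] [DecidableEq m] (x : EuclideanSpace ℂ m) :
    toEuclideanLin (1 : Matrix m m ℂ) x = x := by
  simp [toEuclideanLin_apply]

lemma norm_toEuclideanLin_apply_le {m : Type*} [Fintype m] [DecidableEq m] (M : Matrix m m ℂ)
    (x : EuclideanSpace ℂ m) :
    ‖toEuclideanLin M x‖ ≤ ‖M‖ * ‖x‖ := by
  rw [Matrix.l2_opNorm_def]
  exact ((Matrix.toEuclideanLin.trans LinearMap.toContinuousLinearMap) M).le_opNorm x

lemma norm_eq_one_of_inner {E : Type*} [NormedAddCommGroup E] [InnerProductSpace ℂ E] {x : E}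
    (hx : ⟪x, x⟫_ℂ = 1) : ‖x‖ = 1 := by
  have h0 := inner_self_eq_norm_sq (𝕜 := ℂ) x
  rw [hx] at h0
  have h2 : ‖x‖ ^ 2 = 1 := by simpa using h0.symm
  nlinarith [norm_nonneg x]

lemma toEuclideanLin_shift {m : Type*} [Fintype m] [DecidableEq m] (M : Matrix m m ℂ) (c : ℂ)
    (x : EuclideanSpace ℂ m) :
    toEuclideanLin (M - c • 1) x = toEuclideanLin M x - c • x := by
  rw [map_sub, _root_.map_smul, LinearMap.sub_apply, LinearMap.smul_apply]
  rw [toEuclideanLin_one_apply]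

lemma shift_comm {m : Type*} [Fintype m] [DecidableEq m] (M N : Matrix m m ℂ) (a b : ℂ) :
    (M - a • 1) * (N - b • 1) - (N - b • 1) * (M - a • 1) = M * N - N * M := by
  simp only [sub_mul, mul_sub, smul_mul_assoc, mul_smul_comm, one_mul, mul_one, smul_smul]
  module

/-- A family of Hermitian matrices satisfying the Clifford relations. -/
def IsCliffordFamily {g d : ℕ} (Γ : Fin d → Matrix (Fin g) (Fin g) ℂ) : Prop :=
  (∀ j, (Γ j).IsHermitian) ∧ (∀ j, Γ j * Γ j = 1) ∧
    (∀ j k, j ≠ k → Γ j * Γ k = -(Γ k * Γ j))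

/-- `B(X₁,…,X_d) = Σ_j X_j ⊗ Γ_j`. -/
noncomputable def Bmat {n g d : ℕ} (X : Fin d → Matrix (Fin n) (Fin n) ℂ)
    (Γ : Fin d → Matrix (Fin g) (Fin g) ℂ) :
    Matrix (Fin n × Fin g) (Fin n × Fin g) ℂ :=
  ∑ j, (X j) ⊗ₖ (Γ j)

/-- `B_λ(X₁,…,X_d) = Σ_j (X_j - λ_j I) ⊗ Γ_j`. -/
noncomputable def Blam {n g d : ℕ} (X : Fin d → Matrix (Fin n) (Fin n) ℂ)
    (Γ : Fin d → Matrix (Fin g) (Fin g) ℂ) (lam : Fin d → ℝ) :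
    Matrix (Fin n × Fin g) (Fin n × Fin g) ℂ :=
  Bmat (fun j => X j - (lam j : ℂ) • 1) Γ

set_option maxHeartbeats 1000000 in
theorem stmt3 {d g n : ℕ} (Γ : Fin d → Matrix (Fin g) (Fin g) ℂ)
    (hΓ : IsCliffordFamily Γ)
    (X : Fin d → Matrix (Fin n) (Fin n) ℂ) (hX : ∀ j, (X j).IsHermitian)
    (lam : Fin d → ℝ) (ε : ℝ) (hε : 0 ≤ ε)
    (v : EuclideanSpace ℂ (Fin n)) (hv : ‖v‖ = 1)
    (h : ∀ j, ‖Matrix.toEuclideanLin (X j) v - (lam j : ℂ) • v‖ ≤ ε) :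
    ¬ IsUnit (Blam X Γ lam) ∨
      ‖(Blam X Γ lam)⁻¹‖⁻¹ ≤
        Real.sqrt (Real.sqrt g * d * ε ^ 2 +
          ∑ j, ∑ k, if j ≠ k then ‖X j * X k - X k * X j‖ else 0) := by
  classical
  obtain ⟨hΓherm, hΓsq, hΓanti⟩ := hΓ
  by_cases hg : g = 0
  · right
    subst hg
    have hz : (Blam X Γ lam)⁻¹ = 0 := by
      ext i j
      exact i.2.elim0
    rw [hz, norm_zero, _root_.inv_zero]
    exact Real.sqrt_nonneg _
  have hgpos : 0 < g := Nat.pos_of_ne_zero hg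
  by_cases hB : IsUnit (Blam X Γ lam)
  swap
  · exact Or.inl hB
  right
  set B := Blam X Γ lam with hBdef
  set u : EuclideanSpace ℂ (Fin g) := EuclideanSpace.single ⟨0, hgpos⟩ 1 with hu
  have hun : ‖u‖ = 1 := by rw [hu, EuclideanSpace.norm_single]; exact norm_one
  set Y : Fin d → Matrix (Fin n) (Fin n) ℂ := fun j => X j - (lam j : ℂ) • 1 with hY
  set w : EuclideanSpace ℂ (Fin n × Fin g) := tens v u with hw
  set p : Fin d → EuclideanSpace ℂ (Fin n) := fun j => toEuclideanLin (Y j) v with hp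
  set q : Fin d → EuclideanSpace ℂ (Fin g) := fun j => toEuclideanLin (Γ j) u with hq
  set t : Fin d → Fin d → ℂ := fun j k => ⟪p j, p k⟫_ℂ * ⟪q j, q k⟫_ℂ with ht
  have hwn : ‖w‖ = 1 := by
    apply norm_eq_one_of_inner
    rw [hw, inner_tens, inner_self_eq_norm_sq_to_K, inner_self_eq_norm_sq_to_K, hv, hun]
    norm_num
  have hYh : ∀ j, (Y j).IsHermitian := by
    intro j
    have h1 : ((lam j : ℂ) • (1 : Matrix (Fin n) (Fin n) ℂ)).IsHermitian := by
      simp [Matrix.IsHermitian, Matrix.conjTranspose_smul, Complex.star_def,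
        Complex.conj_ofReal]
    exact (hX j).sub h1
  have hYsym := fun j => Matrix.isHermitian_iff_isSymmetric.mp (hYh j)
  have hΓsym := fun j => Matrix.isHermitian_iff_isSymmetric.mp (hΓherm j)
  have hpjk : ∀ j k, ⟪p j, p k⟫_ℂ = ⟪v, toEuclideanLin (Y j * Y k) v⟫_ℂ := by
    intro j k
    rw [toEuclideanLin_mul_apply]
    exact hYsym j v (toEuclideanLin (Y k) v)
  have hqjk : ∀ j k, ⟪q j, q k⟫_ℂ = ⟪u, toEuclideanLin (Γ j * Γ k) u⟫_ℂ := by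
    intro j k
    rw [toEuclideanLin_mul_apply]
    exact hΓsym j u (toEuclideanLin (Γ k) u)
  have hqq : ∀ j, ⟪q j, q j⟫_ℂ = 1 := by
    intro j
    rw [hqjk j j, hΓsq j, toEuclideanLin_one_apply, inner_self_eq_norm_sq_to_K, hun]
    norm_num
  have hqn : ∀ j, ‖q j‖ = 1 := fun j => norm_eq_one_of_inner (hqq j)
  have hpε : ∀ j, ‖p j‖ ≤ ε := by
    intro j
    have h1 : p j = toEuclideanLin (X j) v - (lam j : ℂ) • v := toEuclideanLin_shift _ _ _
    rw [h1]
    exact h j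
  have hBw : toEuclideanLin B w = ∑ j, tens (p j) (q j) := by
    rw [hBdef]
    show toEuclideanLin (Blam X Γ lam) w = _
    unfold Blam Bmat
    rw [map_sum]
    simp only [LinearMap.coe_sum, Finset.sum_apply]
    exact Finset.sum_congr rfl fun j _ => kron_tens _ _ _ _
  have hS : ⟪toEuclideanLin B w, toEuclideanLin B w⟫_ℂ = ∑ j, ∑ k, t j k := by
    rw [hBw, sum_inner]
    refine Finset.sum_congr rfl fun j _ => ?_
    rw [inner_sum]
    exact Finset.sum_congr rfl fun k _ => inner_tens _ _ _ _
  have hnormsq : ‖toEuclideanLin B w‖^2 = ∑ j, ∑ k, (t j k).re := by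
    have h0 := inner_self_eq_norm_sq (𝕜 := ℂ) (toEuclideanLin B w)
    rw [hS, RCLike.re_to_complex] at h0
    rw [← h0, Complex.re_sum]
    exact Finset.sum_congr rfl fun j _ => Complex.re_sum _ _
  have hdiag : ∀ j, (t j j).re ≤ ε^2 := by
    intro j
    have h1 : t j j = ⟪p j, p j⟫_ℂ := by
      rw [ht]
      simp only [hqq]
      rw [mul_one]
    have h2 := inner_self_eq_norm_sq (𝕜 := ℂ) (p j)
    rw [RCLike.re_to_complex] at h2
    rw [h1, h2]
    exact pow_le_pow_left₀ (norm_nonneg _) (hpε j) 2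
  have hoff : ∀ j k, j ≠ k → (t j k).re ≤ ‖X j * X k - X k * X j‖ := by
    intro j k hjk
    have hanti : ⟪q k, q j⟫_ℂ = -⟪q j, q k⟫_ℂ := by
      rw [hqjk k j, hqjk j k, hΓanti k j (Ne.symm hjk), map_neg, LinearMap.neg_apply,
        inner_neg_right]
    have hdiff : ⟪p j, p k⟫_ℂ - ⟪p k, p j⟫_ℂ
        = ⟪v, toEuclideanLin (X j * X k - X k * X j) v⟫_ℂ := by
      rw [hpjk j k, hpjk k j, ← inner_sub_right]
      congr 1
      rw [← shift_comm (X j) (X k) (lam j : ℂ) (lam k : ℂ), map_sub, LinearMap.sub_apply]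
    have h2re : ((2 * (t j k).re : ℝ) : ℂ)
        = ⟪v, toEuclideanLin (X j * X k - X k * X j) v⟫_ℂ * ⟪q j, q k⟫_ℂ := by
      rw [← Complex.add_conj, ← hdiff, sub_mul, ht]
      simp only []
      rw [_root_.map_mul, inner_conj_symm, inner_conj_symm, hanti]
      ring
    have b1 : ‖⟪v, toEuclideanLin (X j * X k - X k * X j) v⟫_ℂ‖
        ≤ ‖X j * X k - X k * X j‖ := by
      calc ‖⟪v, toEuclideanLin (X j * X k - X k * X j) v⟫_ℂ‖
          ≤ ‖v‖ * ‖toEuclideanLin (X j * X k - X k * X j) v‖ := norm_inner_le_norm _ _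
        _ ≤ ‖v‖ * (‖X j * X k - X k * X j‖ * ‖v‖) := by
            apply mul_le_mul_of_nonneg_left (norm_toEuclideanLin_apply_le _ _) (norm_nonneg _)
        _ = ‖X j * X k - X k * X j‖ := by rw [hv]; ring
    have b2 : ‖⟪q j, q k⟫_ℂ‖ ≤ 1 := by
      calc ‖⟪q j, q k⟫_ℂ‖ ≤ ‖q j‖ * ‖q k‖ := norm_inner_le_norm _ _
        _ = 1 := by rw [hqn j, hqn k, mul_one]
    have hb : |2 * (t j k).re| ≤ ‖X j * X k - X k * X j‖ := by
      have h3 : ‖((2 * (t j k).re : ℝ) : ℂ)‖ ≤ ‖X j * X k - X k * X j‖ * 1 := by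
        rw [h2re, norm_mul]
        exact mul_le_mul b1 b2 (norm_nonneg _) (norm_nonneg _)
      rw [Complex.norm_real, mul_one] at h3
      exact h3
    have h4 : 2 * (t j k).re ≤ ‖X j * X k - X k * X j‖ := (abs_le.mp hb).2
    have h5 : (0:ℝ) ≤ ‖X j * X k - X k * X j‖ := norm_nonneg _
    linarith
  -- step 1
  have hdet : IsUnit B.det := (Matrix.isUnit_iff_isUnit_det _).mp hB
  have hinv : toEuclideanLin B⁻¹ (toEuclideanLin B w) = w := by
    rw [← toEuclideanLin_mul_apply, Matrix.nonsing_inv_mul _ hdet, toEuclideanLin_one_apply]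
  have h1 : (1:ℝ) ≤ ‖B⁻¹‖ * ‖toEuclideanLin B w‖ := by
    calc (1:ℝ) = ‖w‖ := hwn.symm
      _ = ‖toEuclideanLin B⁻¹ (toEuclideanLin B w)‖ := by rw [hinv]
      _ ≤ ‖B⁻¹‖ * ‖toEuclideanLin B w‖ := norm_toEuclideanLin_apply_le _ _
  have hpos : 0 < ‖B⁻¹‖ := by
    rcases (norm_nonneg (B⁻¹)).lt_or_eq with h' | h'
    · exact h'
    · rw [← h', zero_mul] at h1; linarith
  have step1 : ‖B⁻¹‖⁻¹ ≤ ‖toEuclideanLin B w‖ := by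
    rw [← one_div, div_le_iff₀ hpos]
    linarith [h1, mul_comm ‖B⁻¹‖ ‖toEuclideanLin B w‖]
  refine le_trans step1 ?_
  -- step 2
  rw [← Real.sqrt_sq (norm_nonneg (toEuclideanLin B w))]
  apply Real.sqrt_le_sqrt
  rw [hnormsq]
  have hsplit : ∀ j : Fin d, (∑ k, (t j k).re)
      = (t j j).re + ∑ k, (if j ≠ k then (t j k).re else 0) := by
    intro j
    have hterm : ∀ k : Fin d, (t j k).re
        = (if j = k then (t j k).re else 0) + (if j ≠ k then (t j k).re else 0) := by
      intro k
      by_cases hjk : j = k <;> simp [hjk]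
    rw [Finset.sum_congr rfl (fun k _ => hterm k), Finset.sum_add_distrib,
      Finset.sum_ite_eq]
    simp
  calc (∑ j, ∑ k, (t j k).re)
      = ∑ j, ((t j j).re + ∑ k, (if j ≠ k then (t j k).re else 0)) :=
        Finset.sum_congr rfl fun j _ => hsplit j
    _ = (∑ j, (t j j).re) + ∑ j, ∑ k, (if j ≠ k then (t j k).re else 0) :=
        Finset.sum_add_distrib
    _ ≤ (∑ j : Fin d, ε^2)
        + ∑ j, ∑ k, (if j ≠ k then ‖X j * X k - X k * X j‖ else 0) := by
        apply add_le_add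
        · exact Finset.sum_le_sum fun j _ => hdiag j
        · refine Finset.sum_le_sum fun j _ => Finset.sum_le_sum fun k _ => ?_
          by_cases hjk : j ≠ k
          · simpa [hjk] using hoff j k hjk
          · simp [hjk]
    _ ≤ Real.sqrt g * d * ε^2
        + ∑ j, ∑ k, (if j ≠ k then ‖X j * X k - X k * X j‖ else 0) := by
        apply add_le_add_left
        rw [Finset.sum_const, Finset.card_univ, Fintype.card_fin, nsmul_eq_mul]
        have h1g : (1:ℝ) ≤ Real.sqrt g := by
          rw [Real.one_le_sqrt]
          exact_mod_cast hgpos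
        rw [mul_assoc]
        exact le_mul_of_one_le_left (by positivity) h1g
end

section
/- Let A, B ∈ M_n(ℂ) be Hermitian and take the Clifford matrices Γ₁ = [[0,1],[1,0]] and Γ₂ = [[0,i],[−i,0]] in M₂(ℂ). For (λ₁, λ₂) ∈ ℝ², the matrix B_{(λ₁,λ₂)}(A,B) = (A−λ₁I)⊗Γ₁ + (B−λ₂I)⊗Γ₂ is singular if and only if λ₁ + iλ₂ is an eigenvalue of A + iB; moreover when it is invertible, ‖(B_{(λ₁,λ₂)}(A,B))⁻¹‖ = ‖((λ₁+iλ₂)I − (A+iB))⁻¹‖. -/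
open Matrix
open scoped Kronecker Matrix.Norms.L2Operator

private lemma kmulVec {n : ℕ} (X Y : Matrix (Fin n) (Fin n) ℂ) (G H : Matrix (Fin 2) (Fin 2) ℂ)
    (x : Fin n × Fin 2 → ℂ) (i : Fin n) (k : Fin 2) :
    ((X ⊗ₖ G + Y ⊗ₖ H) *ᵥ x) (i, k) =
      G k 0 * (X *ᵥ fun j => x (j, 0)) i + G k 1 * (X *ᵥ fun j => x (j, 1)) i +
      H k 0 * (Y *ᵥ fun j => x (j, 0)) i + H k 1 * (Y *ᵥ fun j => x (j, 1)) i := by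
  simp only [Matrix.mulVec, dotProduct, Fintype.sum_prod_type, Fin.sum_univ_two,
    Matrix.add_apply, Matrix.kroneckerMap_apply, Finset.mul_sum, ← Finset.sum_add_distrib]
  congr 1; ext j; ring

private lemma l2_opNorm_le_bound' {m : Type*} [Fintype m] [DecidableEq m]
    (D : Matrix m m ℂ) {c : ℝ} (hc : 0 ≤ c)
    (H : ∀ x : EuclideanSpace ℂ m, ‖(EuclideanSpace.equiv m ℂ).symm (D *ᵥ x)‖ ≤ c * ‖x‖) :
    ‖D‖ ≤ c := by
  rw [Matrix.l2_opNorm_def]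
  exact ContinuousLinearMap.opNorm_le_bound _ hc H

private lemma euclid_norm_sq {ι : Type*} [Fintype ι] (w : ι → ℂ) :
    ‖((EuclideanSpace.equiv ι ℂ).symm w : EuclideanSpace ℂ ι)‖ ^ 2 = ∑ i, ‖w i‖ ^ 2 := by
  rw [EuclideanSpace.norm_eq, Real.sq_sqrt (by positivity)]
  rfl

private lemma keyNorm {n : ℕ} (X Y : Matrix (Fin n) (Fin n) ℂ) (h : ‖Y‖ ≤ ‖X‖) :
    ‖X ⊗ₖ (!![1, 0; 0, 0] : Matrix (Fin 2) (Fin 2) ℂ) + Y ⊗ₖ !![0, 0; 0, 1]‖ = ‖X‖ := by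
  set D := X ⊗ₖ (!![1, 0; 0, 0] : Matrix (Fin 2) (Fin 2) ℂ) + Y ⊗ₖ !![0, 0; 0, 1] with hD
  apply le_antisymm
  · apply l2_opNorm_le_bound' D (norm_nonneg X)
    intro x
    have hk0 : ∀ i, (D *ᵥ ⇑x) (i, 0) = (X *ᵥ fun j => x (j, 0)) i := by
      intro i; rw [hD, kmulVec]; simp
    have hk1 : ∀ i, (D *ᵥ ⇑x) (i, 1) = (Y *ᵥ fun j => x (j, 1)) i := by
      intro i; rw [hD, kmulVec]; simp
    have h1 : ‖((EuclideanSpace.equiv (Fin n) ℂ).symm (X *ᵥ fun j => x (j, 0)))‖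
        ≤ ‖X‖ * ‖((EuclideanSpace.equiv (Fin n) ℂ).symm (fun j => x (j, 0)))‖ :=
      Matrix.l2_opNorm_mulVec X ((EuclideanSpace.equiv (Fin n) ℂ).symm (fun j => x (j, 0)))
    have h2 : ‖((EuclideanSpace.equiv (Fin n) ℂ).symm (Y *ᵥ fun j => x (j, 1)))‖
        ≤ ‖X‖ * ‖((EuclideanSpace.equiv (Fin n) ℂ).symm (fun j => x (j, 1)))‖ :=
      le_trans (Matrix.l2_opNorm_mulVec Y ((EuclideanSpace.equiv (Fin n) ℂ).symm (fun j => x (j, 1))))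
        (mul_le_mul_of_nonneg_right h (norm_nonneg _))
    have hsq : ‖(EuclideanSpace.equiv (Fin n × Fin 2) ℂ).symm (D *ᵥ ⇑x)‖ ^ 2
        ≤ (‖X‖ * ‖x‖) ^ 2 := by
      rw [euclid_norm_sq, Fintype.sum_prod_type_right, Fin.sum_univ_two]
      have e0 : ∑ i, ‖(D *ᵥ ⇑x) (i, 0)‖ ^ 2
          = ‖((EuclideanSpace.equiv (Fin n) ℂ).symm (X *ᵥ fun j => x (j, 0)))‖ ^ 2 := by
        rw [euclid_norm_sq]; exact Finset.sum_congr rfl fun i _ => by rw [hk0]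
      have e1 : ∑ i, ‖(D *ᵥ ⇑x) (i, 1)‖ ^ 2
          = ‖((EuclideanSpace.equiv (Fin n) ℂ).symm (Y *ᵥ fun j => x (j, 1)))‖ ^ 2 := by
        rw [euclid_norm_sq]; exact Finset.sum_congr rfl fun i _ => by rw [hk1]
      have ex : ‖x‖ ^ 2 = ‖((EuclideanSpace.equiv (Fin n) ℂ).symm (fun j => x (j, 0)))‖ ^ 2
          + ‖((EuclideanSpace.equiv (Fin n) ℂ).symm (fun j => x (j, 1)))‖ ^ 2 := by
        have : ‖x‖ ^ 2 = ∑ p : Fin n × Fin 2, ‖x p‖ ^ 2 := euclid_norm_sq (fun p => x p)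
        rw [this, Fintype.sum_prod_type_right, Fin.sum_univ_two, euclid_norm_sq, euclid_norm_sq]
      rw [e0, e1]
      calc _ ≤ (‖X‖ * ‖((EuclideanSpace.equiv (Fin n) ℂ).symm (fun j => x (j, 0)))‖) ^ 2
            + (‖X‖ * ‖((EuclideanSpace.equiv (Fin n) ℂ).symm (fun j => x (j, 1)))‖) ^ 2 := by
              gcongr
        _ = (‖X‖ * ‖x‖) ^ 2 := by rw [mul_pow, mul_pow, mul_pow, ex]; ring
    exact (pow_le_pow_iff_left₀ (norm_nonneg _) (by positivity) two_ne_zero).mp hsq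
  · apply l2_opNorm_le_bound' X (norm_nonneg D)
    intro v
    set w : EuclideanSpace ℂ (Fin n × Fin 2) :=
      (EuclideanSpace.equiv (Fin n × Fin 2) ℂ).symm (fun p => if p.2 = 0 then v p.1 else 0)
      with hw
    have hwv : ‖w‖ = ‖v‖ := by
      refine (sq_eq_sq₀ (norm_nonneg _) (norm_nonneg _)).mp ?_
      rw [hw, euclid_norm_sq, Fintype.sum_prod_type_right, Fin.sum_univ_two]
      have : ‖v‖ ^ 2 = ∑ j, ‖v j‖ ^ 2 := euclid_norm_sq (fun j => v j)
      rw [this]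
      simp
    have hDw : ‖(EuclideanSpace.equiv (Fin n) ℂ).symm (X *ᵥ ⇑v)‖
        = ‖(EuclideanSpace.equiv (Fin n × Fin 2) ℂ).symm (D *ᵥ ⇑w)‖ := by
      refine (sq_eq_sq₀ (norm_nonneg _) (norm_nonneg _)).mp ?_
      rw [euclid_norm_sq, euclid_norm_sq, Fintype.sum_prod_type_right, Fin.sum_univ_two]
      have hk0 : ∀ i, (D *ᵥ ⇑w) (i, 0) = (X *ᵥ ⇑v) i := by
        intro i; rw [hD, kmulVec]
        simp only [hw]
        norm_num
      have hk1 : ∀ i, (D *ᵥ ⇑w) (i, 1) = 0 := by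
        intro i; rw [hD, kmulVec]
        have : (fun j => w (j, 1)) = (0 : Fin n → ℂ) := by funext j; simp [hw]
        simp [this]
      simp only [hk0, hk1]
      simp
    show ‖(EuclideanSpace.equiv (Fin n) ℂ).symm (X *ᵥ ⇑v)‖ ≤ ‖D‖ * ‖v‖
    rw [hDw, ← hwv]
    exact Matrix.l2_opNorm_mulVec D w

set_option maxHeartbeats 1000000 in
theorem stmt5 {n : ℕ} (A B : Matrix (Fin n) (Fin n) ℂ)
    (hA : A.IsHermitian) (hB : B.IsHermitian) (l1 l2 : ℝ) :
    (¬ IsUnit ((A - (l1 : ℂ) • 1) ⊗ₖ (!![0, 1; 1, 0] : Matrix (Fin 2) (Fin 2) ℂ) +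
          (B - (l2 : ℂ) • 1) ⊗ₖ (!![0, Complex.I; -Complex.I, 0] : Matrix (Fin 2) (Fin 2) ℂ)) ↔
        ((l1 : ℂ) + (l2 : ℂ) * Complex.I) ∈ spectrum ℂ (A + Complex.I • B)) ∧
      (IsUnit ((A - (l1 : ℂ) • 1) ⊗ₖ (!![0, 1; 1, 0] : Matrix (Fin 2) (Fin 2) ℂ) +
          (B - (l2 : ℂ) • 1) ⊗ₖ (!![0, Complex.I; -Complex.I, 0] : Matrix (Fin 2) (Fin 2) ℂ)) →
        ‖((A - (l1 : ℂ) • 1) ⊗ₖ (!![0, 1; 1, 0] : Matrix (Fin 2) (Fin 2) ℂ) +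
            (B - (l2 : ℂ) • 1) ⊗ₖ (!![0, Complex.I; -Complex.I, 0] : Matrix (Fin 2) (Fin 2) ℂ))⁻¹‖ =
          ‖((((l1 : ℂ) + (l2 : ℂ) * Complex.I) • (1 : Matrix (Fin n) (Fin n) ℂ)) -
              (A + Complex.I • B))⁻¹‖) := by
  set z : ℂ := (l1 : ℂ) + (l2 : ℂ) * Complex.I with hz
  set T : Matrix (Fin n) (Fin n) ℂ := A + Complex.I • B with hT
  set C : Matrix (Fin n) (Fin n) ℂ := T - z • 1 with hC
  set C2 : Matrix (Fin n) (Fin n) ℂ := A - Complex.I • B - (starRingEnd ℂ z) • 1 with hC2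
  set M : Matrix (Fin n × Fin 2) (Fin n × Fin 2) ℂ :=
    (A - (l1 : ℂ) • 1) ⊗ₖ (!![0, 1; 1, 0] : Matrix (Fin 2) (Fin 2) ℂ) +
      (B - (l2 : ℂ) • 1) ⊗ₖ (!![0, Complex.I; -Complex.I, 0] : Matrix (Fin 2) (Fin 2) ℂ) with hM
  set P : Matrix (Fin n × Fin 2) (Fin n × Fin 2) ℂ :=
    (1 : Matrix (Fin n) (Fin n) ℂ) ⊗ₖ (!![0, 1; 1, 0] : Matrix (Fin 2) (Fin 2) ℂ) with hP
  have haA : ∀ i j, (starRingEnd ℂ) (A j i) = A i j := fun i j => congrFun (congrFun hA i) j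
  have haB : ∀ i j, (starRingEnd ℂ) (B j i) = B i j := fun i j => congrFun (congrFun hB i) j
  -- C2 = Cᴴ
  have hC2H : C2 = Cᴴ := by
    ext i j
    simp only [hC2, hC, hT, hz, Matrix.conjTranspose_apply, Matrix.sub_apply, Matrix.add_apply,
      Matrix.smul_apply, Matrix.one_apply, Complex.star_def, map_sub, _root_.map_add, _root_.map_mul,
      Complex.conj_I, Complex.conj_ofReal, smul_eq_mul]
    rw [haA, haB]
    rcases eq_or_ne i j with h | h <;> simp [h, eq_comm] <;> ring
  -- M = C ⊗ E01 + C2 ⊗ E10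
  have h1 : M = C ⊗ₖ (!![0, 1; 0, 0] : Matrix (Fin 2) (Fin 2) ℂ) +
      C2 ⊗ₖ (!![0, 0; 1, 0] : Matrix (Fin 2) (Fin 2) ℂ) := by
    ext ⟨i, k⟩ ⟨j, l⟩
    simp only [hM, hC2, hC, hT, hz, Matrix.add_apply, Matrix.kroneckerMap_apply,
      Matrix.sub_apply, Matrix.smul_apply, Matrix.one_apply, smul_eq_mul, _root_.map_add, _root_.map_mul,
      Complex.conj_I, Complex.conj_ofReal]
    fin_cases k <;> fin_cases l <;>
      rcases eq_or_ne i j with h | h <;>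
        simp [h] <;> ring
  -- 2x2 facts
  have hG1G1 : (!![0,1;1,0] : Matrix (Fin 2) (Fin 2) ℂ) * !![0,1;1,0] = 1 := by
    ext i j; fin_cases i <;> fin_cases j <;>
      norm_num [Matrix.mul_apply, Fin.sum_univ_two, Matrix.one_apply]
  have hE01 : (!![0,1;0,0] : Matrix (Fin 2) (Fin 2) ℂ) * !![0,1;1,0] = !![1,0;0,0] := by
    ext i j; fin_cases i <;> fin_cases j <;>
      norm_num [Matrix.mul_apply, Fin.sum_univ_two]
  have hE10 : (!![0,0;1,0] : Matrix (Fin 2) (Fin 2) ℂ) * !![0,1;1,0] = !![0,0;0,1] := by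
    ext i j; fin_cases i <;> fin_cases j <;>
      norm_num [Matrix.mul_apply, Fin.sum_univ_two]
  have hE0000 : (!![1,0;0,0] : Matrix (Fin 2) (Fin 2) ℂ) * !![1,0;0,0] = !![1,0;0,0] := by
    ext i j; fin_cases i <;> fin_cases j <;>
      norm_num [Matrix.mul_apply, Fin.sum_univ_two]
  have hE0011 : (!![1,0;0,0] : Matrix (Fin 2) (Fin 2) ℂ) * !![0,0;0,1] = 0 := by
    ext i j; fin_cases i <;> fin_cases j <;>
      norm_num [Matrix.mul_apply, Fin.sum_univ_two]
  have hE1100 : (!![0,0;0,1] : Matrix (Fin 2) (Fin 2) ℂ) * !![1,0;0,0] = 0 := by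
    ext i j; fin_cases i <;> fin_cases j <;>
      norm_num [Matrix.mul_apply, Fin.sum_univ_two]
  have hE1111 : (!![0,0;0,1] : Matrix (Fin 2) (Fin 2) ℂ) * !![0,0;0,1] = !![0,0;0,1] := by
    ext i j; fin_cases i <;> fin_cases j <;>
      norm_num [Matrix.mul_apply, Fin.sum_univ_two]
  have hEsum : (!![1,0;0,0] : Matrix (Fin 2) (Fin 2) ℂ) + !![0,0;0,1] = 1 := by
    ext i j; fin_cases i <;> fin_cases j <;> norm_num [Matrix.one_apply]
  have hPP : P * P = 1 := by
    rw [hP, ← Matrix.mul_kronecker_mul, hG1G1, one_mul, Matrix.one_kronecker_one]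
  have hPH : Pᴴ = P := by
    ext ⟨i, k⟩ ⟨j, l⟩
    simp only [hP, Matrix.conjTranspose_apply, Matrix.kroneckerMap_apply]
    fin_cases k <;> fin_cases l <;> simp [Matrix.one_apply, eq_comm]
  -- D = M * P
  set D : Matrix (Fin n × Fin 2) (Fin n × Fin 2) ℂ :=
    C ⊗ₖ (!![1,0;0,0] : Matrix (Fin 2) (Fin 2) ℂ) + C2 ⊗ₖ !![0,0;0,1] with hD
  have hMP : M * P = D := by
    rw [h1, hP, add_mul, ← Matrix.mul_kronecker_mul, ← Matrix.mul_kronecker_mul, mul_one, mul_one,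
      hE01, hE10, hD]
  set D' : Matrix (Fin n × Fin 2) (Fin n × Fin 2) ℂ :=
    C⁻¹ ⊗ₖ (!![1,0;0,0] : Matrix (Fin 2) (Fin 2) ℂ) + C2⁻¹ ⊗ₖ !![0,0;0,1] with hD'
  -- forward: IsUnit C → explicit inverse of M
  have hMinv : IsUnit C → M * (P * D') = 1 := by
    intro hCu
    have hdet : IsUnit C.det := (Matrix.isUnit_iff_isUnit_det C).mp hCu
    have hdet2 : IsUnit C2.det := by
      rw [hC2H, Matrix.det_conjTranspose]
      exact hdet.star
    rw [← mul_assoc, hMP, hD, hD', add_mul, mul_add, mul_add,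
      ← Matrix.mul_kronecker_mul, ← Matrix.mul_kronecker_mul, ← Matrix.mul_kronecker_mul,
      ← Matrix.mul_kronecker_mul, hE0000, hE0011, hE1100, hE1111,
      Matrix.mul_nonsing_inv _ hdet, Matrix.mul_nonsing_inv _ hdet2,
      Matrix.kronecker_zero, Matrix.kronecker_zero, add_zero, zero_add,
      ← Matrix.kronecker_add, hEsum, Matrix.one_kronecker_one]
  have hfwd : IsUnit C → IsUnit M := by
    intro hCu
    have h := hMinv hCu
    have : IsUnit M.det := by
      refine IsUnit.of_mul_eq_one (P * D').det ?_
      rw [← Matrix.det_mul, h, Matrix.det_one]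
    exact (Matrix.isUnit_iff_isUnit_det M).mpr this
  have hrev : ¬ IsUnit C → ¬ IsUnit M := by
    intro hCn
    have hdet : C.det = 0 := by
      by_contra hne
      exact hCn ((Matrix.isUnit_iff_isUnit_det C).mpr (isUnit_iff_ne_zero.mpr hne))
    obtain ⟨v, hv0, hv⟩ := (Matrix.exists_mulVec_eq_zero_iff).mpr hdet
    have hdetM : M.det = 0 := by
      rw [← Matrix.exists_mulVec_eq_zero_iff]
      refine ⟨fun p => if p.2 = 1 then v p.1 else 0, ?_, ?_⟩
      · intro hcon
        apply hv0
        funext j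
        have := congrFun hcon (j, 1)
        simpa using this
      · funext ⟨i, k⟩
        rw [h1, kmulVec]
        have e1 : (fun j => if (1 : Fin 2) = 1 then v j else 0) = v := by funext j; simp
        have e0 : (fun j => if (0 : Fin 2) = 1 then v j else 0) = (0 : Fin n → ℂ) := by
          funext j; simp
        simp only [e0, e1]
        fin_cases k <;> simp [hv, Matrix.mulVec_zero]
    intro hMu
    have := (Matrix.isUnit_iff_isUnit_det M).mp hMu
    rw [hdetM] at this
    exact (not_isUnit_zero this).elim
  have hCM : IsUnit M ↔ IsUnit C :=
    ⟨fun hMu => by by_contra hCn; exact hrev hCn hMu, hfwd⟩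
  have hnegC : z • (1 : Matrix (Fin n) (Fin n) ℂ) - T = -C := by rw [hC, neg_sub]
  constructor
  · rw [spectrum.mem_iff, Algebra.algebraMap_eq_smul_one, hnegC, IsUnit.neg_iff,
      not_iff_not, hCM]
  · intro hMu
    have hCu : IsUnit C := hCM.mp hMu
    have hdet : IsUnit C.det := (Matrix.isUnit_iff_isUnit_det C).mp hCu
    have hdet2 : IsUnit C2.det := by
      rw [hC2H, Matrix.det_conjTranspose]; exact hdet.star
    have hMinveq : M⁻¹ = P * D' := Matrix.inv_eq_right_inv (hMinv hCu)
    -- ‖P * D'‖ = ‖D'‖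
    have hPD' : ‖P * D'‖ = ‖D'‖ := by
      have h1' := Matrix.l2_opNorm_conjTranspose_mul_self (P * D')
      have h2' := Matrix.l2_opNorm_conjTranspose_mul_self D'
      have he : (P * D')ᴴ * (P * D') = D'ᴴ * D' := by
        rw [Matrix.conjTranspose_mul, mul_assoc, ← mul_assoc Pᴴ, hPH, hPP, one_mul]
      rw [he, h2'] at h1'
      exact ((mul_self_inj_of_nonneg (norm_nonneg _) (norm_nonneg _)).mp h1').symm
    have hD'norm : ‖D'‖ = ‖C⁻¹‖ := by
      rw [hD']
      apply keyNorm
      rw [hC2H, ← Matrix.conjTranspose_nonsing_inv, Matrix.l2_opNorm_conjTranspose]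
    have hRHS : (z • (1 : Matrix (Fin n) (Fin n) ℂ) - T)⁻¹ = -(C⁻¹) := by
      rw [hnegC]
      refine Matrix.inv_eq_right_inv ?_
      rw [neg_mul_neg, Matrix.mul_nonsing_inv _ hdet]
    rw [hMinveq, hPD', hD'norm, hRHS, norm_neg]
end

section
/- Let σ_x, σ_y, σ_z denote the Pauli matrices and use them also as the Clifford matrices Γ₁ = σ_x, Γ₂ = σ_y, Γ₃ = σ_z. For all real r, s, t: det( B_{(r,s,t)}(σ_x, σ_y, σ_z) ) = (r² + s² + t² + 1)² − 4. Consequently the Clifford spectrum Λ(σ_x, σ_y, σ_z) equals the unit sphere { (r,s,t) ∈ ℝ³ : r² + s² + t² = 1 }. -/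
open Matrix
open scoped Kronecker

noncomputable def pauliX : Matrix (Fin 2) (Fin 2) ℂ := !![0, 1; 1, 0]
noncomputable def pauliY : Matrix (Fin 2) (Fin 2) ℂ := !![0, -Complex.I; Complex.I, 0]
noncomputable def pauliZ : Matrix (Fin 2) (Fin 2) ℂ := !![1, 0; 0, -1]

/-- `B_{(r,s,t)}(σ_x,σ_y,σ_z)` with the Pauli matrices as Clifford matrices. -/
noncomputable def Bpauli (r s t : ℝ) : Matrix (Fin 2 × Fin 2) (Fin 2 × Fin 2) ℂ :=
  (pauliX - (r : ℂ) • 1) ⊗ₖ pauliX + (pauliY - (s : ℂ) • 1) ⊗ₖ pauliY +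
    (pauliZ - (t : ℂ) • 1) ⊗ₖ pauliZ

theorem stmt6 (r s t : ℝ) :
    (Bpauli r s t).det = (((r ^ 2 + s ^ 2 + t ^ 2 + 1) ^ 2 - 4 : ℝ) : ℂ) ∧
      (¬ IsUnit (Bpauli r s t) ↔ r ^ 2 + s ^ 2 + t ^ 2 = 1) := by
  have hdet : (Bpauli r s t).det = (((r ^ 2 + s ^ 2 + t ^ 2 + 1) ^ 2 - 4 : ℝ) : ℂ) := by
    rw [show (Bpauli r s t).det =
        ((reindex finProdFinEquiv finProdFinEquiv (Bpauli r s t)).det) from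
      (det_reindex_self _ _).symm]
    rw [det_succ_row_zero]
    simp [Bpauli, pauliX, pauliY, pauliZ, finProdFinEquiv, Fin.divNat, Fin.modNat,
      Fin.sum_univ_succ, det_succ_row_zero, Matrix.det_fin_two, Fin.succAbove,
      Matrix.one_apply]
    ring_nf
    simp [Complex.ext_iff]
  refine ⟨hdet, ?_⟩
  rw [show ¬ IsUnit (Bpauli r s t) ↔ ¬ IsUnit (Bpauli r s t).det from
    not_congr (Matrix.isUnit_iff_isUnit_det _)]
  rw [isUnit_iff_ne_zero, not_not, hdet]
  rw [show (((r ^ 2 + s ^ 2 + t ^ 2 + 1) ^ 2 - 4 : ℝ) : ℂ) = 0 ↔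
      ((r ^ 2 + s ^ 2 + t ^ 2 + 1) ^ 2 - 4 : ℝ) = 0 from Complex.ofReal_eq_zero]
  constructor
  · intro h
    nlinarith [sq_nonneg r, sq_nonneg s, sq_nonneg t, sq_nonneg (r^2+s^2+t^2-1), sq_nonneg (r^2+s^2+t^2+3)]
  · intro h; rw [h]; ring
end

section
/- With Γ₁ = σ_x, Γ₂ = σ_y, Γ₃ = σ_z as Clifford matrices, for every (r,s,t) ∈ ℝ³ with r² + s² + t² < 1 the Hermitian matrix B_{(r,s,t)}(σ_x, σ_y, σ_z) is invertible with Sig(B_{(r,s,t)}(σ_x,σ_y,σ_z)) = 2, and for every (r,s,t) with r² + s² + t² > 1 it is invertible with Sig(B_{(r,s,t)}(σ_x,σ_y,σ_z)) = 0. -/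
open Matrix
open scoped Kronecker

/-- The signature of a matrix: the number of positive eigenvalues minus the number of
negative eigenvalues (counted with multiplicity) when the matrix is Hermitian,
and `0` otherwise (a junk value). -/
noncomputable def sig {m : Type*} [Fintype m] [DecidableEq m] (Q : Matrix m m ℂ) : ℤ := by
  classical
  exact if h : Q.IsHermitian then
    ((Finset.univ.filter fun i => 0 < h.eigenvalues i).card : ℤ) -
      ((Finset.univ.filter fun i => h.eigenvalues i < 0).card : ℤ)
  else 0

def auxE4 : Fin 4 ≃ Fin 2 × Fin 2 where
  toFun := ![(0,0),(0,1),(1,0),(1,1)]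
  invFun := fun p => ![![0,1],![2,3]] p.1 p.2
  left_inv := by decide
  right_inv := by decide

lemma aux_herm (r s t : ℝ) : (Bpauli r s t).IsHermitian := by
  ext i j
  fin_cases i <;> fin_cases j <;>
    simp [Bpauli, pauliX, pauliY, pauliZ, Matrix.conjTranspose_apply, Matrix.one_apply,
      Complex.ext_iff]

lemma aux_detkey (r s t : ℝ) (x : ℂ) :
    det (x • (1 : Matrix (Fin 2 × Fin 2) (Fin 2 × Fin 2) ℂ) - Bpauli r s t) =
      (x^2 - 2*x + 1 - ((r^2+s^2+t^2 : ℝ) : ℂ)) * (x^2 + 2*x - 3 - ((r^2+s^2+t^2 : ℝ) : ℂ)) := by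
  rw [← Matrix.det_submatrix_equiv_self auxE4]
  have hM : (x • (1 : Matrix (Fin 2 × Fin 2) (Fin 2 × Fin 2) ℂ) - Bpauli r s t).submatrix auxE4 auxE4
        = !![x-1+t, r-s*Complex.I, 0, 0;
             r+s*Complex.I, x+1-t, -2, 0;
             0, -2, x+1+t, r-s*Complex.I;
             0, 0, r+s*Complex.I, x-1-t] := by
    ext i j
    fin_cases i <;> fin_cases j <;>
      simp [auxE4, Bpauli, pauliX, pauliY, pauliZ, Matrix.one_apply, Prod.ext_iff,
        Matrix.vecHead, Matrix.vecTail] <;> ring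
  rw [hM]
  simp [Matrix.det_succ_row_zero, Fin.sum_univ_succ, Matrix.det_fin_three, Fin.succAbove,
    ]
  ring_nf
  simp [Complex.I_sq]
  ring

lemma aux_prodkey (r s t : ℝ) (x : ℂ) :
    det (x • (1 : Matrix (Fin 2 × Fin 2) (Fin 2 × Fin 2) ℂ) - Bpauli r s t) =
      ∏ i, (x - ((aux_herm r s t).eigenvalues i : ℂ)) := by
  have hH := aux_herm r s t
  set U : Matrix (Fin 2 × Fin 2) (Fin 2 × Fin 2) ℂ :=
    (hH.eigenvectorUnitary : Matrix (Fin 2 × Fin 2) (Fin 2 × Fin 2) ℂ) with hUdef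
  have h1 : U * star U = 1 := Matrix.mem_unitaryGroup_iff.mp hH.eigenvectorUnitary.2
  have hrw : x • (1 : Matrix (Fin 2 × Fin 2) (Fin 2 × Fin 2) ℂ) - Bpauli r s t
      = U * (x • 1 - diagonal (RCLike.ofReal ∘ hH.eigenvalues)) * star U := by
    rw [mul_sub, sub_mul, mul_smul_comm, mul_one, smul_mul_assoc, h1]
    congr 1
    exact hH.spectral_theorem
  have h2 : det U * det (star U) = 1 := by rw [← det_mul, h1, det_one]
  rw [hrw, det_mul, det_mul]
  have h3 : det U * det (x • 1 - diagonal (RCLike.ofReal ∘ hH.eigenvalues)) * det (star U)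
      = det (x • (1 : Matrix (Fin 2 × Fin 2) (Fin 2 × Fin 2) ℂ)
          - diagonal (RCLike.ofReal ∘ hH.eigenvalues)) * (det U * det (star U)) := by ring
  rw [h3, h2, mul_one, Matrix.smul_one_eq_diagonal, Matrix.diagonal_sub, Matrix.det_diagonal]
  simp [Function.comp]

lemma aux_evset (r s t : ℝ) :
    (Finset.univ.val.map (aux_herm r s t).eigenvalues) =
      ({1 - Real.sqrt (r^2+s^2+t^2), 1 + Real.sqrt (r^2+s^2+t^2),
        Real.sqrt (4+(r^2+s^2+t^2)) - 1, -1 - Real.sqrt (4+(r^2+s^2+t^2))} : Multiset ℝ) := by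
  have hq0 : (0:ℝ) ≤ r^2+s^2+t^2 := by positivity
  have hq4 : (0:ℝ) ≤ 4 + (r^2+s^2+t^2) := by positivity
  set p := Real.sqrt (r^2+s^2+t^2) with hpdef
  set w := Real.sqrt (4+(r^2+s^2+t^2)) with hwdef
  have hp2 : p^2 = r^2+s^2+t^2 := Real.sq_sqrt hq0
  have hw2 : w^2 = 4+(r^2+s^2+t^2) := Real.sq_sqrt hq4
  have key : ∀ x : ℝ, ∏ i, (x - (aux_herm r s t).eigenvalues i)
      = (x - (1-p)) * ((x - (1+p)) * ((x - (w-1)) * (x - (-1-w)))) := by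
    intro x
    have h := (aux_prodkey r s t (x:ℂ)).symm.trans (aux_detkey r s t (x:ℂ))
    have h2 : ((∏ i, (x - (aux_herm r s t).eigenvalues i) : ℝ) : ℂ)
        = (((x - (1-p)) * ((x - (1+p)) * ((x - (w-1)) * (x - (-1-w))))  : ℝ) : ℂ) := by
      push_cast
      push_cast at h
      rw [h]
      have hp2c : ((p:ℂ))^2 = (r:ℂ)^2+(s:ℂ)^2+(t:ℂ)^2 := by
        exact_mod_cast congrArg Complex.ofReal hp2
      have hw2c : ((w:ℂ))^2 = 4+((r:ℂ)^2+(s:ℂ)^2+(t:ℂ)^2) := by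
        exact_mod_cast congrArg Complex.ofReal hw2
      linear_combination (((x:ℂ)+1)^2 - (w:ℂ)^2) * hp2c +
        (((x:ℂ)-1)^2 - ((r:ℂ)^2+(s:ℂ)^2+(t:ℂ)^2)) * hw2c
    exact_mod_cast h2
  have hpoly : ((Finset.univ.val.map (aux_herm r s t).eigenvalues).map
        (fun a => Polynomial.X - Polynomial.C a)).prod
      = (({1-p, 1+p, w-1, -1-w} : Multiset ℝ).map fun a => Polynomial.X - Polynomial.C a).prod := by
    apply Polynomial.funext
    intro x
    rw [Polynomial.eval_multiset_prod, Polynomial.eval_multiset_prod]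
    simp only [Multiset.map_map, Function.comp, Polynomial.eval_sub, Polynomial.eval_X,
      Polynomial.eval_C]
    rw [show (Finset.univ.val.map fun i => x - (aux_herm r s t).eigenvalues i).prod
        = ∏ i, (x - (aux_herm r s t).eigenvalues i) from rfl]
    rw [key x]
    simp [Multiset.insert_eq_cons]
  have hr := congrArg Polynomial.roots hpoly
  rwa [Polynomial.roots_multiset_prod_X_sub_C, Polynomial.roots_multiset_prod_X_sub_C] at hr

open scoped Classical in
lemma aux_sig_eq {m : Type*} [Fintype m] [DecidableEq m] (Q : Matrix m m ℂ) (h : Q.IsHermitian) :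
    sig Q = ((Finset.univ.filter fun i => 0 < h.eigenvalues i).card : ℤ) -
      ((Finset.univ.filter fun i => h.eigenvalues i < 0).card : ℤ) := by
  unfold sig
  rw [dif_pos h]

open scoped Classical in
lemma aux_count {m : Type*} [Fintype m] (e : m → ℝ) (p : ℝ → Prop) [DecidablePred p] :
    ((Finset.univ.filter fun i => p (e i)).card : ℤ)
      = Multiset.countP p (Finset.univ.val.map e) := by
  rw [Multiset.countP_map, Finset.card, Finset.filter_val]

theorem stmt7 (r s t : ℝ) :
    (r ^ 2 + s ^ 2 + t ^ 2 < 1 → IsUnit (Bpauli r s t) ∧ sig (Bpauli r s t) = 2) ∧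
      (1 < r ^ 2 + s ^ 2 + t ^ 2 → IsUnit (Bpauli r s t) ∧ sig (Bpauli r s t) = 0) := by
  classical
  have hH := aux_herm r s t
  have hq0 : (0:ℝ) ≤ r^2+s^2+t^2 := by positivity
  set p := Real.sqrt (r^2+s^2+t^2) with hpdef
  set w := Real.sqrt (4+(r^2+s^2+t^2)) with hwdef
  have hp2 : p^2 = r^2+s^2+t^2 := Real.sq_sqrt hq0
  have hw2 : w^2 = 4+(r^2+s^2+t^2) := Real.sq_sqrt (by positivity)
  have hp0 : 0 ≤ p := Real.sqrt_nonneg _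
  have hw1 : 1 < w := by
    rw [hwdef, show (1:ℝ) = Real.sqrt 1 by simp]
    exact Real.sqrt_lt_sqrt (by norm_num) (by linarith)
  -- determinant as a product of eigenvalues
  have hprodR : (∏ i, (aux_herm r s t).eigenvalues i) = (1-p)*((1+p)*((w-1)*(-1-w))) := by
    rw [show (∏ i, (aux_herm r s t).eigenvalues i)
        = (Finset.univ.val.map (aux_herm r s t).eigenvalues).prod from rfl, aux_evset r s t]
    simp [Multiset.insert_eq_cons]
    rfl
  have hdet : det (Bpauli r s t) = (((1-p)*((1+p)*((w-1)*(-1-w))) : ℝ) : ℂ) := by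
    rw [hH.det_eq_prod_eigenvalues, ← hprodR]
    push_cast
    rfl
  -- generic signature computation given sign information
  have main : ∀ _ : (1-p) ≠ 0, IsUnit (Bpauli r s t) := by
    intro h1
    have h2 : (1+p) ≠ 0 := by linarith
    have h3 : (w-1) ≠ 0 := by linarith
    have h4 : (-1-w) ≠ 0 := by linarith
    refine (Matrix.isUnit_iff_isUnit_det _).mpr (isUnit_iff_ne_zero.mpr ?_)
    rw [hdet]
    exact_mod_cast Complex.ofReal_ne_zero.mpr
      (mul_ne_zero h1 (mul_ne_zero h2 (mul_ne_zero h3 h4)))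
  have sigcalc : sig (Bpauli r s t)
      = (Multiset.countP (fun y => 0 < y) (Finset.univ.val.map hH.eigenvalues) : ℤ)
        - (Multiset.countP (fun y => y < 0) (Finset.univ.val.map hH.eigenvalues) : ℤ) := by
    rw [aux_sig_eq _ hH, aux_count hH.eigenvalues (fun y => 0 < y),
      aux_count hH.eigenvalues (fun y => y < 0)]
  constructor
  · intro hlt
    have hp1 : p < 1 := by
      rw [hpdef, show (1:ℝ) = Real.sqrt 1 by simp]
      exact Real.sqrt_lt_sqrt hq0 hlt
    refine ⟨main (by linarith), ?_⟩
    rw [sigcalc, aux_evset r s t]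
    have c1 : (0:ℝ) < 1 - p := by linarith
    have c2 : (0:ℝ) < 1 + p := by linarith
    have c3 : (0:ℝ) < w - 1 := by linarith
    have c4 : ¬ ((0:ℝ) < -1 - w) := by push_neg; linarith
    have d1 : ¬ ((1:ℝ) - p < 0) := by push_neg; linarith
    have d2 : ¬ ((1:ℝ) + p < 0) := by push_neg; linarith
    have d3 : ¬ (w - 1 < (0:ℝ)) := by push_neg; linarith
    have d4 : (-1:ℝ) - w < 0 := by linarith
    simp [Multiset.insert_eq_cons, Multiset.countP_cons, c1, c2, c3, c4, d1, d2, d3, d4, ← Multiset.cons_zero, Multiset.countP_zero]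
    rw [← hpdef, ← hwdef]
    simp [hw1, hp1, c2, d2, show ¬ w < -1 by linarith, show -1 < w by linarith,
      show ¬ w < 1 by linarith, show ¬ 1 < p by linarith]
  · intro hgt
    have hp1 : 1 < p := by
      rw [hpdef, show (1:ℝ) = Real.sqrt 1 by simp]
      exact Real.sqrt_lt_sqrt (by norm_num) hgt
    refine ⟨main (by linarith), ?_⟩
    rw [sigcalc, aux_evset r s t]
    have c1 : ¬ ((0:ℝ) < 1 - p) := by push_neg; linarith
    have c2 : (0:ℝ) < 1 + p := by linarith
    have c3 : (0:ℝ) < w - 1 := by linarith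
    have c4 : ¬ ((0:ℝ) < -1 - w) := by push_neg; linarith
    have d1 : (1:ℝ) - p < 0 := by linarith
    have d2 : ¬ ((1:ℝ) + p < 0) := by push_neg; linarith
    have d3 : ¬ (w - 1 < (0:ℝ)) := by push_neg; linarith
    have d4 : (-1:ℝ) - w < 0 := by linarith
    simp [Multiset.insert_eq_cons, Multiset.countP_cons, c1, c2, c3, c4, d1, d2, d3, d4, ← Multiset.cons_zero, Multiset.countP_zero]
    rw [← hpdef, ← hwdef]
    simp [hw1, hp1, c2, d2, show ¬ w < -1 by linarith, show -1 < w by linarith,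
      show ¬ w < 1 by linarith, show ¬ p < 1 by linarith]
end

section
/- Let Γ₁, …, Γ_d ∈ M_g(ℂ) be Hermitian matrices satisfying the Clifford relations, and let X₁, …, X_d and Y₁, …, Y_d be Hermitian matrices in M_n(ℂ). Then (i) |‖(B(X₁,…,X_d))⁻¹‖⁻¹ − ‖(B(Y₁,…,Y_d))⁻¹‖⁻¹| ≤ ‖B(X₁−Y₁, …, X_d−Y_d)‖; and (ii) if B(X₁,…,X_d) and B(Y₁,…,Y_d) are both invertible with Sig(B(X₁,…,X_d)) ≠ Sig(B(Y₁,…,Y_d)), then ‖(B(X₁,…,X_d))⁻¹‖⁻¹ + ‖(B(Y₁,…,Y_d))⁻¹‖⁻¹ ≤ ‖B(X₁−Y₁, …, X_d−Y_d)‖, and there exists t ∈ [0,1] such that B((1−t)X₁+tY₁, …, (1−t)X_d+tY_d) is singular. -/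
open Matrix
open scoped Kronecker Matrix.Norms.L2Operator

namespace Stmt17Aux

variable {m : Type*} [Fintype m] [DecidableEq m]

noncomputable abbrev T (A : Matrix m m ℂ) : EuclideanSpace ℂ m →L[ℂ] EuclideanSpace ℂ m :=
  Matrix.toEuclideanCLM (𝕜 := ℂ) A

lemma T_apply_le (A : Matrix m m ℂ) (x : EuclideanSpace ℂ m) : ‖T A x‖ ≤ ‖A‖ * ‖x‖ := by
  have := (Matrix.toEuclideanCLM (𝕜:=ℂ) A).le_opNorm x
  rwa [← Matrix.cstar_norm_def] at this

lemma T_inv_apply {A : Matrix m m ℂ} (hU : IsUnit A) (x : EuclideanSpace ℂ m) :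
    T A⁻¹ (T A x) = x := by
  have h1 : T A⁻¹ (T A x) = (T A⁻¹ * T A) x := rfl
  rw [h1, ← _root_.map_mul, Matrix.nonsing_inv_mul A (A.isUnit_iff_isUnit_det.mp hU), _root_.map_one]
  rfl

lemma T_apply_inv {A : Matrix m m ℂ} (hU : IsUnit A) (x : EuclideanSpace ℂ m) :
    T A (T A⁻¹ x) = x := by
  have h1 : T A (T A⁻¹ x) = (T A * T A⁻¹) x := rfl
  rw [h1, ← _root_.map_mul, Matrix.mul_nonsing_inv A (A.isUnit_iff_isUnit_det.mp hU), _root_.map_one]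
  rfl

lemma inv_eq_zero_of_not_isUnit {A : Matrix m m ℂ} (hU : ¬ IsUnit A) : A⁻¹ = 0 :=
  Matrix.nonsing_inv_apply_not_isUnit _ (by rwa [← Matrix.isUnit_iff_isUnit_det])

lemma mu_mul_le (A : Matrix m m ℂ) (x : EuclideanSpace ℂ m) :
    ‖A⁻¹‖⁻¹ * ‖x‖ ≤ ‖T A x‖ := by
  by_cases hU : IsUnit A
  · rcases eq_or_lt_of_le (norm_nonneg A⁻¹) with hz | hz
    · rw [← hz, _root_.inv_zero, zero_mul]; exact norm_nonneg _
    · have hx : ‖x‖ ≤ ‖A⁻¹‖ * ‖T A x‖ := by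
        conv_lhs => rw [← T_inv_apply hU x]
        exact T_apply_le _ _
      rw [inv_mul_le_iff₀ hz]
      exact hx
  · rw [inv_eq_zero_of_not_isUnit hU]
    simp [norm_nonneg]

lemma inv_ne_zero_of_isUnit [Nonempty m] {A : Matrix m m ℂ} (hU : IsUnit A) : A⁻¹ ≠ 0 := by
  intro h
  have h1 : A * A⁻¹ = 1 := Matrix.mul_nonsing_inv A (A.isUnit_iff_isUnit_det.mp hU)
  rw [h, mul_zero] at h1
  have i := Classical.arbitrary m
  have := congrFun (congrFun h1 i) i
  simp [Matrix.one_apply_eq, Matrix.zero_apply] at this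

lemma mu_pos [Nonempty m] {A : Matrix m m ℂ} (hU : IsUnit A) : 0 < ‖A⁻¹‖⁻¹ := by
  have := norm_pos_iff.mpr (inv_ne_zero_of_isUnit hU)
  positivity

lemma mu_nonneg (A : Matrix m m ℂ) : 0 ≤ ‖A⁻¹‖⁻¹ := by positivity


lemma T_eigen {Q : Matrix m m ℂ} (hQ : Q.IsHermitian) (i : m) :
    T Q (hQ.eigenvectorBasis i) = (hQ.eigenvalues i : ℂ) • hQ.eigenvectorBasis i := by
  apply (WithLp.equiv 2 (m → ℂ)).injective
  rw [show (WithLp.equiv 2 (m → ℂ)) (T Q (hQ.eigenvectorBasis i)) = Q *ᵥ (WithLp.equiv 2 (m → ℂ)) (hQ.eigenvectorBasis i) from rfl]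
  have h := hQ.mulVec_eigenvectorBasis i
  rw [show (WithLp.equiv 2 (m → ℂ)) (hQ.eigenvectorBasis i) = ⇑(hQ.eigenvectorBasis i) from rfl, h]
  funext j
  simp [Complex.real_smul]

lemma T_selfAdjoint {Q : Matrix m m ℂ} (hQ : Q.IsHermitian) :
    ContinuousLinearMap.adjoint (T Q) = T Q := by
  rw [← ContinuousLinearMap.star_eq_adjoint, ← map_star, Matrix.star_eq_conjTranspose, hQ]

lemma repr_T_apply {Q : Matrix m m ℂ} (hQ : Q.IsHermitian) (x : EuclideanSpace ℂ m) (i : m) :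
    hQ.eigenvectorBasis.repr (T Q x) i
      = (hQ.eigenvalues i : ℂ) * hQ.eigenvectorBasis.repr x i := by
  rw [OrthonormalBasis.repr_apply_apply, OrthonormalBasis.repr_apply_apply,
    ← ContinuousLinearMap.adjoint_inner_left, T_selfAdjoint hQ, T_eigen hQ i,
    inner_smul_left, Complex.conj_ofReal]

/-- Parseval-type expansion of the norm. -/
lemma norm_sq_eq {Q : Matrix m m ℂ} (hQ : Q.IsHermitian) (x : EuclideanSpace ℂ m) :
    ‖x‖ ^ 2 = ∑ i, ‖hQ.eigenvectorBasis.repr x i‖ ^ 2 := by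
  rw [← hQ.eigenvectorBasis.repr.norm_map x, EuclideanSpace.norm_eq,
    Real.sq_sqrt (by positivity)]

/-- The quadratic form. -/
noncomputable def quad (A : Matrix m m ℂ) (x : EuclideanSpace ℂ m) : ℝ :=
  (inner ℂ x (T A x) : ℂ).re

lemma quad_eq_sum {Q : Matrix m m ℂ} (hQ : Q.IsHermitian) (x : EuclideanSpace ℂ m) :
    quad Q x = ∑ i, hQ.eigenvalues i * ‖hQ.eigenvectorBasis.repr x i‖ ^ 2 := by
  unfold quad
  rw [← hQ.eigenvectorBasis.repr.inner_map_map x (T Q x)]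
  rw [PiLp.inner_apply]
  rw [Complex.re_sum]
  congr 1; funext i
  rw [RCLike.inner_apply, repr_T_apply hQ x i]
  set c := hQ.eigenvectorBasis.repr x i
  have : (hQ.eigenvalues i : ℂ) * c * (starRingEnd ℂ) c = (hQ.eigenvalues i : ℂ) * (c * (starRingEnd ℂ) c) := by ring
  rw [this, Complex.mul_conj]
  rw [show ‖c‖^2 = Complex.normSq c from Complex.sq_norm c]
  simp [Complex.ofReal_mul]

lemma norm_T_ge {Q : Matrix m m ℂ} (hQ : Q.IsHermitian) {c : ℝ} (hc : 0 ≤ c)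
    (h : ∀ i, c ≤ |hQ.eigenvalues i|) (x : EuclideanSpace ℂ m) :
    c * ‖x‖ ≤ ‖T Q x‖ := by
  have h1 : (c * ‖x‖) ^ 2 ≤ ‖T Q x‖ ^ 2 := by
    rw [mul_pow, norm_sq_eq hQ x, norm_sq_eq hQ (T Q x), Finset.mul_sum]
    apply Finset.sum_le_sum
    intro i _
    rw [repr_T_apply hQ x i, norm_mul, mul_pow]
    have h2 : ‖(hQ.eigenvalues i : ℂ)‖ = |hQ.eigenvalues i| := by
      rw [Complex.norm_real, Real.norm_eq_abs]
    rw [h2]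
    have := h i
    have h3 : c^2 ≤ |hQ.eigenvalues i|^2 := by nlinarith [abs_nonneg (hQ.eigenvalues i)]
    nlinarith [norm_nonneg (hQ.eigenvectorBasis.repr x i), sq_nonneg (hQ.eigenvectorBasis.repr x i).re]
  have h4 : 0 ≤ c * ‖x‖ := by positivity
  nlinarith [norm_nonneg (T Q x)]

lemma inv_norm_le {Q : Matrix m m ℂ} (hQ : Q.IsHermitian) (hU : IsUnit Q) {c : ℝ}
    (hc : 0 < c) (h : ∀ i, c ≤ |hQ.eigenvalues i|) : ‖Q⁻¹‖ ≤ c⁻¹ := by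
  rw [Matrix.cstar_norm_def]
  apply ContinuousLinearMap.opNorm_le_bound _ (by positivity)
  intro x
  have h1 : c * ‖T Q⁻¹ x‖ ≤ ‖T Q (T Q⁻¹ x)‖ := norm_T_ge hQ hc.le h _
  rw [T_apply_inv hU] at h1
  rw [inv_mul_eq_div, le_div_iff₀ hc, mul_comm]
  exact h1

lemma mu_le_abs_eig {Q : Matrix m m ℂ} (hQ : Q.IsHermitian) (i : m) :
    ‖Q⁻¹‖⁻¹ ≤ |hQ.eigenvalues i| := by
  have h1 := mu_mul_le Q (hQ.eigenvectorBasis i)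
  rw [T_eigen hQ i, norm_smul, hQ.eigenvectorBasis.orthonormal.1 i] at h1
  simpa [Complex.norm_real, Real.norm_eq_abs] using h1

lemma eig_ne_zero {Q : Matrix m m ℂ} (hQ : Q.IsHermitian) (hU : IsUnit Q) (i : m) :
    hQ.eigenvalues i ≠ 0 := by
  intro h0
  have h1 : T Q (hQ.eigenvectorBasis i) = 0 := by rw [T_eigen hQ i, h0]; simp
  have h2 := T_inv_apply hU (hQ.eigenvectorBasis i)
  rw [h1, map_zero] at h2
  exact hQ.eigenvectorBasis.orthonormal.ne_zero i h2.symm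

lemma isUnit_of_eig_ne_zero {Q : Matrix m m ℂ} (hQ : Q.IsHermitian)
    (h : ∀ i, hQ.eigenvalues i ≠ 0) : IsUnit Q := by
  rw [Matrix.isUnit_iff_isUnit_det, hQ.det_eq_prod_eigenvalues, isUnit_iff_ne_zero]
  apply Finset.prod_ne_zero_iff.mpr
  intro i _
  exact fun hh => h i (RCLike.ofReal_eq_zero.mp hh)

lemma minabs_le_mu [Nonempty m] {Q : Matrix m m ℂ} (hQ : Q.IsHermitian) (hU : IsUnit Q) :
    Finset.univ.inf' Finset.univ_nonempty (fun i => |hQ.eigenvalues i|) ≤ ‖Q⁻¹‖⁻¹ := by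
  set c := Finset.univ.inf' Finset.univ_nonempty (fun i => |hQ.eigenvalues i|) with hc
  obtain ⟨i₀, _, hi₀⟩ := Finset.exists_mem_eq_inf' Finset.univ_nonempty
    (fun i => |hQ.eigenvalues i|)
  have hcpos : 0 < c := by
    rw [hc, hi₀]
    exact abs_pos.mpr (eig_ne_zero hQ hU i₀)
  have h1 : ‖Q⁻¹‖ ≤ c⁻¹ :=
    inv_norm_le hQ hU hcpos (fun i => Finset.inf'_le _ (Finset.mem_univ i))
  have h2 : 0 < ‖Q⁻¹‖ := norm_pos_iff.mpr (inv_ne_zero_of_isUnit hU)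
  calc c = (c⁻¹)⁻¹ := by rw [inv_inv]
  _ ≤ ‖Q⁻¹‖⁻¹ := by apply inv_anti₀ h2 h1

lemma norm_matrix_empty [IsEmpty m] (A : Matrix m m ℂ) : ‖A‖ = 0 := by
  rw [Matrix.cstar_norm_def]
  have h0 : ∀ y : EuclideanSpace ℂ m, y = 0 := fun y => (WithLp.equiv 2 (m → ℂ)).injective (funext fun i => isEmptyElim i)
  apply le_antisymm _ (norm_nonneg _)
  apply ContinuousLinearMap.opNorm_le_bound _ le_rfl
  intro x
  rw [h0 ((Matrix.toEuclideanCLM (𝕜:=ℂ) A) x)]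
  simp

lemma T_sub_apply (A B : Matrix m m ℂ) (x : EuclideanSpace ℂ m) :
    T (A - B) x = T A x - T B x := by
  have h : Matrix.toEuclideanCLM (𝕜:=ℂ) (A - B)
      = Matrix.toEuclideanCLM (𝕜:=ℂ) A - Matrix.toEuclideanCLM (𝕜:=ℂ) B :=
    _root_.map_sub _ A B
  rw [show T (A-B) = Matrix.toEuclideanCLM (𝕜:=ℂ) (A - B) from rfl, h]
  rfl

lemma mu_le {A B : Matrix m m ℂ} (hB : B.IsHermitian) :
    ‖A⁻¹‖⁻¹ ≤ ‖B⁻¹‖⁻¹ + ‖A - B‖ := by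
  by_cases hUB : IsUnit B
  · rcases isEmpty_or_nonempty m with hm | hm
    · have hz : ‖A⁻¹‖ = 0 := norm_matrix_empty _
      rw [hz, _root_.inv_zero]
      positivity
    · obtain ⟨i₀, _, hi₀⟩ := Finset.exists_mem_eq_inf' Finset.univ_nonempty
        (fun i => |hB.eigenvalues i|)
      set v := hB.eigenvectorBasis i₀ with hv
      have hv1 : ‖v‖ = 1 := hB.eigenvectorBasis.orthonormal.1 i₀
      have h1 : ‖A⁻¹‖⁻¹ ≤ ‖T A v‖ := by
        have := mu_mul_le A v
        rwa [hv1, mul_one] at this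
      have h2 : ‖T A v‖ ≤ ‖T B v‖ + ‖T (A - B) v‖ := by
        have he : T A v = T B v + T (A - B) v := by rw [T_sub_apply]; abel
        rw [he]; exact norm_add_le _ _
      have h3 : ‖T B v‖ = |hB.eigenvalues i₀| := by
        rw [hv, T_eigen hB i₀, norm_smul, hv1]
        simp [Complex.norm_real, Real.norm_eq_abs]
      have h4 : ‖T (A - B) v‖ ≤ ‖A - B‖ := by
        have := T_apply_le (A - B) v
        rwa [hv1, mul_one] at this
      have h5 := minabs_le_mu hB hUB
      rw [hi₀] at h5
      linarith
  · have hB0 : ‖B⁻¹‖⁻¹ = 0 := by rw [inv_eq_zero_of_not_isUnit hUB]; simp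
    rw [hB0, zero_add]
    have hdet : B.det = 0 := by
      by_contra h
      exact hUB (B.isUnit_iff_isUnit_det.mpr (isUnit_iff_ne_zero.mpr h))
    obtain ⟨v, hv0, hv⟩ := Matrix.exists_mulVec_eq_zero_iff.mpr hdet
    set x : EuclideanSpace ℂ m := (WithLp.equiv 2 (m → ℂ)).symm v with hxdef
    have hxpos : 0 < ‖x‖ := by
      rw [norm_pos_iff]
      intro h
      exact hv0 ((WithLp.equiv 2 (m → ℂ)).symm.injective (by rw [← hxdef, h]; rfl))
    have hTB : T B x = 0 := by
      apply (WithLp.equiv 2 (m → ℂ)).injective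
      rw [show (WithLp.equiv 2 (m → ℂ)) (T B x) = B *ᵥ (WithLp.equiv 2 (m → ℂ)) x from rfl]
      exact hv
    have h1 : ‖A⁻¹‖⁻¹ * ‖x‖ ≤ ‖T A x‖ := mu_mul_le A x
    have h2 : T A x = T (A - B) x := by rw [T_sub_apply, hTB, sub_zero]
    have h3 : ‖T (A - B) x‖ ≤ ‖A - B‖ * ‖x‖ := T_apply_le _ _
    rw [h2] at h1
    have := le_trans h1 h3
    exact le_of_mul_le_mul_right this hxpos


lemma span_finrank (b : OrthonormalBasis m ℂ (EuclideanSpace ℂ m)) (S : Finset m) :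
    Module.finrank ℂ
      (Submodule.span ℂ (Set.range fun i : S => b (i : m))) = S.card := by
  have hli : LinearIndependent ℂ (fun i : S => b (i : m)) :=
    (b.orthonormal.linearIndependent).comp Subtype.val Subtype.val_injective
  rw [finrank_span_eq_card hli, Fintype.card_coe]

lemma span_repr_eq_zero (b : OrthonormalBasis m ℂ (EuclideanSpace ℂ m)) (S : Finset m)
    {v : EuclideanSpace ℂ m}
    (hv : v ∈ Submodule.span ℂ (Set.range fun i : S => b (i : m))) {j : m} (hj : j ∉ S) :
    b.repr v j = 0 := by
  induction hv using Submodule.span_induction with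
  | mem x h =>
    obtain ⟨i, rfl⟩ := h
    rw [b.repr_self, EuclideanSpace.single_apply]
    exact if_neg (fun hji => hj (by rw [hji]; exact i.2))
  | zero => simp
  | add x y hx hy ihx ihy => rw [map_add, PiLp.add_apply, ihx, ihy, add_zero]
  | smul a x hx ih => rw [_root_.map_smul, PiLp.smul_apply, ih, smul_zero]

lemma finrank_le_card_pos {Q' : Matrix m m ℂ} (hQ' : Q'.IsHermitian)
    (V : Submodule ℂ (EuclideanSpace ℂ m))
    (hV : ∀ v ∈ V, v ≠ 0 → 0 < quad Q' v) :
    Module.finrank ℂ V ≤ (Finset.univ.filter fun i => 0 < hQ'.eigenvalues i).card := by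
  by_contra hlt
  push_neg at hlt
  classical
  set S := Finset.univ.filter (fun i => ¬ 0 < hQ'.eigenvalues i) with hS
  set W : Submodule ℂ (EuclideanSpace ℂ m) :=
    Submodule.span ℂ (Set.range fun i : S => hQ'.eigenvectorBasis (i : m)) with hW
  have hWrank : Module.finrank ℂ W = S.card := span_finrank _ _
  have hcards : (Finset.univ.filter fun i => 0 < hQ'.eigenvalues i).card + S.card
      = Fintype.card m := by
    rw [hS, Finset.card_filter_add_card_filter_not, Finset.card_univ]
  have hdim : Module.finrank ℂ (EuclideanSpace ℂ m) = Fintype.card m := finrank_euclideanSpace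
  have hsum := Submodule.finrank_sup_add_finrank_inf_eq V W
  have hle : Module.finrank ℂ ((V ⊔ W : Submodule ℂ _)) ≤ Fintype.card m :=
    hdim ▸ Submodule.finrank_le _
  have hpos : 0 < Module.finrank ℂ (V ⊓ W : Submodule ℂ _) := by omega
  obtain ⟨⟨v, hvmem⟩, hvne⟩ := Module.finrank_pos_iff_exists_ne_zero.mp hpos
  have hv0 : v ≠ 0 := fun h => hvne (Subtype.ext h)
  have hquadpos := hV v hvmem.1 hv0
  have hquadle : quad Q' v ≤ 0 := by
    rw [quad_eq_sum hQ' v]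
    apply Finset.sum_nonpos
    intro i _
    by_cases hi : i ∈ S
    · have hile : hQ'.eigenvalues i ≤ 0 := by
        rw [hS] at hi
        exact le_of_not_gt (by simpa using (Finset.mem_filter.mp hi).2)
      nlinarith [sq_nonneg ‖hQ'.eigenvectorBasis.repr v i‖]
    · rw [span_repr_eq_zero _ S hvmem.2 hi]
      simp
  linarith

lemma finrank_le_card_neg {Q' : Matrix m m ℂ} (hQ' : Q'.IsHermitian)
    (V : Submodule ℂ (EuclideanSpace ℂ m))
    (hV : ∀ v ∈ V, v ≠ 0 → quad Q' v < 0) :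
    Module.finrank ℂ V ≤ (Finset.univ.filter fun i => hQ'.eigenvalues i < 0).card := by
  by_contra hlt
  push_neg at hlt
  classical
  set S := Finset.univ.filter (fun i => ¬ hQ'.eigenvalues i < 0) with hS
  set W : Submodule ℂ (EuclideanSpace ℂ m) :=
    Submodule.span ℂ (Set.range fun i : S => hQ'.eigenvectorBasis (i : m)) with hW
  have hWrank : Module.finrank ℂ W = S.card := span_finrank _ _
  have hcards : (Finset.univ.filter fun i => hQ'.eigenvalues i < 0).card + S.card
      = Fintype.card m := by
    rw [hS, Finset.card_filter_add_card_filter_not, Finset.card_univ]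
  have hdim : Module.finrank ℂ (EuclideanSpace ℂ m) = Fintype.card m := finrank_euclideanSpace
  have hsum := Submodule.finrank_sup_add_finrank_inf_eq V W
  have hle : Module.finrank ℂ ((V ⊔ W : Submodule ℂ _)) ≤ Fintype.card m :=
    hdim ▸ Submodule.finrank_le _
  have hpos : 0 < Module.finrank ℂ (V ⊓ W : Submodule ℂ _) := by omega
  obtain ⟨⟨v, hvmem⟩, hvne⟩ := Module.finrank_pos_iff_exists_ne_zero.mp hpos
  have hv0 : v ≠ 0 := fun h => hvne (Subtype.ext h)
  have hquadneg := hV v hvmem.1 hv0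
  have hquadge : 0 ≤ quad Q' v := by
    rw [quad_eq_sum hQ' v]
    apply Finset.sum_nonneg
    intro i _
    by_cases hi : i ∈ S
    · have hige : 0 ≤ hQ'.eigenvalues i := by
        rw [hS] at hi
        exact le_of_not_gt (by simpa using (Finset.mem_filter.mp hi).2)
      positivity
    · rw [span_repr_eq_zero _ S hvmem.2 hi]
      simp
  linarith


lemma quad_ge_on_pos_span {Q : Matrix m m ℂ} (hQ : Q.IsHermitian)
    {v : EuclideanSpace ℂ m}
    (hv : v ∈ Submodule.span ℂ (Set.range
      fun i : (Finset.univ.filter fun i => 0 < hQ.eigenvalues i) =>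
        hQ.eigenvectorBasis (i : m))) :
    ‖Q⁻¹‖⁻¹ * ‖v‖ ^ 2 ≤ quad Q v := by
  rw [quad_eq_sum hQ v, norm_sq_eq hQ v, Finset.mul_sum]
  apply Finset.sum_le_sum
  intro i _
  by_cases hi : i ∈ Finset.univ.filter fun i => 0 < hQ.eigenvalues i
  · have hpos : 0 < hQ.eigenvalues i := (Finset.mem_filter.mp hi).2
    have hle : ‖Q⁻¹‖⁻¹ ≤ hQ.eigenvalues i :=
      (mu_le_abs_eig hQ i).trans_eq (abs_of_pos hpos)
    exact mul_le_mul_of_nonneg_right hle (by positivity)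
  · rw [span_repr_eq_zero _ _ hv hi]
    simp

lemma quad_le_on_neg_span {Q : Matrix m m ℂ} (hQ : Q.IsHermitian)
    {v : EuclideanSpace ℂ m}
    (hv : v ∈ Submodule.span ℂ (Set.range
      fun i : (Finset.univ.filter fun i => hQ.eigenvalues i < 0) =>
        hQ.eigenvectorBasis (i : m))) :
    quad Q v ≤ -(‖Q⁻¹‖⁻¹ * ‖v‖ ^ 2) := by
  rw [quad_eq_sum hQ v, norm_sq_eq hQ v, Finset.mul_sum, ← Finset.sum_neg_distrib]
  apply Finset.sum_le_sum
  intro i _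
  by_cases hi : i ∈ Finset.univ.filter fun i => hQ.eigenvalues i < 0
  · have hneg : hQ.eigenvalues i < 0 := (Finset.mem_filter.mp hi).2
    have hle : ‖Q⁻¹‖⁻¹ ≤ -hQ.eigenvalues i :=
      (mu_le_abs_eig hQ i).trans_eq (abs_of_neg hneg)
    nlinarith [sq_nonneg ‖hQ.eigenvectorBasis.repr v i‖]
  · rw [span_repr_eq_zero _ _ hv hi]
    simp

lemma abs_quad_sub_le (P R : Matrix m m ℂ) (x : EuclideanSpace ℂ m) :
    |quad P x - quad R x| ≤ ‖P - R‖ * ‖x‖ ^ 2 := by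
  have h : quad P x - quad R x = (inner ℂ x (T (P - R) x) : ℂ).re := by
    unfold quad
    rw [T_sub_apply, inner_sub_right, Complex.sub_re]
  rw [h]
  have h2 : |(inner ℂ x (T (P - R) x) : ℂ).re| ≤ ‖(inner ℂ x (T (P - R) x) : ℂ)‖ := by
    exact Complex.abs_re_le_norm _
  have h3 : ‖(inner ℂ x (T (P - R) x) : ℂ)‖ ≤ ‖x‖ * ‖T (P - R) x‖ := norm_inner_le_norm _ _
  have h4 := T_apply_le (P - R) x
  nlinarith [norm_nonneg x, norm_nonneg (T (P - R) x)]

lemma pos_count_mono {Q Q' : Matrix m m ℂ} (hQ : Q.IsHermitian) (hQ' : Q'.IsHermitian)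
    (hlt : ‖Q' - Q‖ < ‖Q⁻¹‖⁻¹) :
    (Finset.univ.filter fun i => 0 < hQ.eigenvalues i).card
      ≤ (Finset.univ.filter fun i => 0 < hQ'.eigenvalues i).card := by
  classical
  set V : Submodule ℂ (EuclideanSpace ℂ m) := Submodule.span ℂ (Set.range
    fun i : (Finset.univ.filter fun i => 0 < hQ.eigenvalues i) =>
      hQ.eigenvectorBasis (i : m)) with hV
  have hr : Module.finrank ℂ V = (Finset.univ.filter fun i => 0 < hQ.eigenvalues i).card :=
    span_finrank _ _
  rw [← hr]
  apply finrank_le_card_pos hQ' V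
  intro v hvmem hv0
  have h1 := quad_ge_on_pos_span hQ hvmem
  have h2 := abs_quad_sub_le Q' Q v
  have h3 : 0 < ‖v‖ ^ 2 := by have := norm_pos_iff.mpr hv0; positivity
  have h4 : |quad Q' v - quad Q v| ≤ ‖Q' - Q‖ * ‖v‖ ^ 2 := h2
  have h5 : ‖Q' - Q‖ * ‖v‖ ^ 2 < ‖Q⁻¹‖⁻¹ * ‖v‖ ^ 2 := by
    exact mul_lt_mul_of_pos_right hlt h3
  have := abs_le.mp h4
  linarith [this.1, this.2]

lemma neg_count_mono {Q Q' : Matrix m m ℂ} (hQ : Q.IsHermitian) (hQ' : Q'.IsHermitian)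
    (hlt : ‖Q' - Q‖ < ‖Q⁻¹‖⁻¹) :
    (Finset.univ.filter fun i => hQ.eigenvalues i < 0).card
      ≤ (Finset.univ.filter fun i => hQ'.eigenvalues i < 0).card := by
  classical
  set V : Submodule ℂ (EuclideanSpace ℂ m) := Submodule.span ℂ (Set.range
    fun i : (Finset.univ.filter fun i => hQ.eigenvalues i < 0) =>
      hQ.eigenvectorBasis (i : m)) with hV
  have hr : Module.finrank ℂ V = (Finset.univ.filter fun i => hQ.eigenvalues i < 0).card :=
    span_finrank _ _
  rw [← hr]
  apply finrank_le_card_neg hQ' V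
  intro v hvmem hv0
  have h1 := quad_le_on_neg_span hQ hvmem
  have h2 := abs_quad_sub_le Q' Q v
  have h3 : 0 < ‖v‖ ^ 2 := by have := norm_pos_iff.mpr hv0; positivity
  have h5 : ‖Q' - Q‖ * ‖v‖ ^ 2 < ‖Q⁻¹‖⁻¹ * ‖v‖ ^ 2 :=
    mul_lt_mul_of_pos_right hlt h3
  have := abs_le.mp h2
  linarith [this.1, this.2]


lemma sig_eq {Q : Matrix m m ℂ} (hQ : Q.IsHermitian) :
    sig Q = ((Finset.univ.filter fun i => 0 < hQ.eigenvalues i).card : ℤ) -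
      ((Finset.univ.filter fun i => hQ.eigenvalues i < 0).card : ℤ) := by
  unfold sig
  rw [dif_pos hQ]

lemma sig_empty [IsEmpty m] (Q : Matrix m m ℂ) : sig Q = 0 := by
  unfold sig
  split <;> simp

lemma isUnit_and_sig_eq {Q Q' : Matrix m m ℂ} (hQ : Q.IsHermitian) (hQ' : Q'.IsHermitian)
    (hU : IsUnit Q) (hlt : ‖Q' - Q‖ < ‖Q⁻¹‖⁻¹) :
    IsUnit Q' ∧ sig Q' = sig Q := by
  classical
  have hP := pos_count_mono hQ hQ' hlt
  have hN := neg_count_mono hQ hQ' hlt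
  have hPN : (Finset.univ.filter fun i => 0 < hQ.eigenvalues i).card
      + (Finset.univ.filter fun i => hQ.eigenvalues i < 0).card = Fintype.card m := by
    have hcongr : (Finset.univ.filter fun i => hQ.eigenvalues i < 0)
        = (Finset.univ.filter fun i => ¬ 0 < hQ.eigenvalues i) := by
      apply Finset.filter_congr
      intro i _
      constructor
      · exact fun h => asymm h
      · exact fun h => lt_of_le_of_ne (le_of_not_gt h) (eig_ne_zero hQ hU i)
    rw [hcongr, Finset.card_filter_add_card_filter_not, Finset.card_univ]
  have hdisj : Disjoint (Finset.univ.filter fun i => 0 < hQ'.eigenvalues i)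
      (Finset.univ.filter fun i => hQ'.eigenvalues i < 0) := by
    rw [Finset.disjoint_left]
    intro a ha hb
    have h1 := (Finset.mem_filter.mp ha).2
    have h2 := (Finset.mem_filter.mp hb).2
    linarith
  have hcardu := Finset.card_union_of_disjoint hdisj
  have hle : ((Finset.univ.filter fun i => 0 < hQ'.eigenvalues i)
      ∪ (Finset.univ.filter fun i => hQ'.eigenvalues i < 0)).card ≤ Fintype.card m := by
    rw [← Finset.card_univ]
    exact Finset.card_le_card (Finset.subset_univ _)
  have hp : (Finset.univ.filter fun i => 0 < hQ.eigenvalues i).card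
        = (Finset.univ.filter fun i => 0 < hQ'.eigenvalues i).card
      ∧ (Finset.univ.filter fun i => hQ.eigenvalues i < 0).card
        = (Finset.univ.filter fun i => hQ'.eigenvalues i < 0).card := by omega
  have hunion : (Finset.univ.filter fun i => 0 < hQ'.eigenvalues i)
      ∪ (Finset.univ.filter fun i => hQ'.eigenvalues i < 0) = Finset.univ := by
    apply Finset.eq_univ_of_card
    omega
  have hU' : IsUnit Q' := by
    apply isUnit_of_eig_ne_zero hQ'
    intro i
    have hi : i ∈ (Finset.univ.filter fun i => 0 < hQ'.eigenvalues i)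
        ∪ (Finset.univ.filter fun i => hQ'.eigenvalues i < 0) := by
      rw [hunion]; exact Finset.mem_univ i
    rcases Finset.mem_union.mp hi with h | h
    · exact ne_of_gt (Finset.mem_filter.mp h).2
    · exact ne_of_lt (Finset.mem_filter.mp h).2
  exact ⟨hU', by rw [sig_eq hQ, sig_eq hQ', hp.1, hp.2]⟩


lemma herm_real_smul {A : Matrix m m ℂ} (hA : A.IsHermitian) (r : ℝ) :
    (((r : ℝ) : ℂ) • A).IsHermitian := by
  have : (((r : ℝ) : ℂ) • A)ᴴ = star ((r : ℝ) : ℂ) • Aᴴ := Matrix.conjTranspose_smul _ _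
  unfold Matrix.IsHermitian
  rw [this, hA, Complex.star_def, Complex.conj_ofReal]

lemma sig_const_path [Nonempty m] {A B : Matrix m m ℂ} (hA : A.IsHermitian) (hB : B.IsHermitian)
    (hall : ∀ t : ℝ, t ∈ Set.Icc (0:ℝ) 1 →
      IsUnit (((1 - t : ℝ) : ℂ) • A + ((t : ℝ) : ℂ) • B)) :
    sig A = sig B := by
  set C : ℝ → Matrix m m ℂ := fun t => ((1 - t : ℝ) : ℂ) • A + ((t : ℝ) : ℂ) • B with hC
  have hherm : ∀ t : ℝ, (C t).IsHermitian := fun t =>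
    Matrix.IsHermitian.add (herm_real_smul hA (1 - t)) (herm_real_smul hB t)
  have hCdiff : ∀ s t : ℝ, C s - C t = ((s - t : ℝ) : ℂ) • (B - A) := by
    intro s t
    ext i j
    simp only [hC, Matrix.sub_apply, Matrix.add_apply, Matrix.smul_apply, smul_eq_mul]
    push_cast
    ring
  have hdistC : ∀ s t : ℝ, ‖C s - C t‖ = |s - t| * ‖B - A‖ := by
    intro s t
    rw [hCdiff s t, norm_smul, Complex.norm_real, Real.norm_eq_abs]
  have hC0 : C 0 = A := by simp [hC]
  have hC1 : C 1 = B := by simp [hC]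
  haveI : PreconnectedSpace (Set.Icc (0:ℝ) 1) :=
    Subtype.preconnectedSpace isPreconnected_Icc
  set f : (Set.Icc (0:ℝ) 1) → ℤ := fun u => sig (C u) with hf
  have hlc : IsLocallyConstant f := by
    rw [IsLocallyConstant.iff_eventually_eq]
    intro t
    rw [Metric.eventually_nhds_iff]
    have hUt : IsUnit (C t) := hall t t.2
    have hmupos : 0 < ‖(C (t:ℝ))⁻¹‖⁻¹ := mu_pos hUt
    refine ⟨‖(C (t:ℝ))⁻¹‖⁻¹ / (‖B - A‖ + 1), by positivity, ?_⟩
    intro s hdist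
    have hdist' : |(s:ℝ) - (t:ℝ)| < ‖(C (t:ℝ))⁻¹‖⁻¹ / (‖B - A‖ + 1) := by
      rwa [Subtype.dist_eq, Real.dist_eq] at hdist
    have hnorm : ‖C (s:ℝ) - C (t:ℝ)‖ < ‖(C (t:ℝ))⁻¹‖⁻¹ := by
      rw [hdistC]
      have hL : (0:ℝ) ≤ ‖B - A‖ := norm_nonneg _
      have habs : (0:ℝ) ≤ |(s:ℝ) - (t:ℝ)| := abs_nonneg _
      calc |(s:ℝ) - (t:ℝ)| * ‖B - A‖ ≤ |(s:ℝ) - (t:ℝ)| * (‖B - A‖ + 1) := by nlinarith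
      _ < (‖(C (t:ℝ))⁻¹‖⁻¹ / (‖B - A‖ + 1)) * (‖B - A‖ + 1) := by
          apply mul_lt_mul_of_pos_right hdist' (by positivity)
      _ = ‖(C (t:ℝ))⁻¹‖⁻¹ := div_mul_cancel₀ _ (by positivity)
    exact (isUnit_and_sig_eq (hherm t) (hherm s) hUt hnorm).2
  have hfe := hlc.apply_eq_of_preconnectedSpace
    ⟨0, by norm_num⟩ ⟨1, by norm_num⟩
  have hfe' : sig (C 0) = sig (C 1) := hfe
  rwa [hC0, hC1] at hfe'


lemma norm_sub_comb_left (A B : Matrix m m ℂ) {t : ℝ} (ht0 : 0 ≤ t) :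
    ‖A - (((1 - t : ℝ) : ℂ) • A + ((t : ℝ) : ℂ) • B)‖ = t * ‖A - B‖ := by
  have h : A - (((1 - t : ℝ) : ℂ) • A + ((t : ℝ) : ℂ) • B) = ((t : ℝ) : ℂ) • (A - B) := by
    ext i j
    simp only [Matrix.sub_apply, Matrix.add_apply, Matrix.smul_apply, smul_eq_mul]
    push_cast
    ring
  rw [h, norm_smul, Complex.norm_real, Real.norm_eq_abs, abs_of_nonneg ht0]

lemma norm_sub_comb_right (A B : Matrix m m ℂ) {t : ℝ} (ht1 : t ≤ 1) :
    ‖B - (((1 - t : ℝ) : ℂ) • A + ((t : ℝ) : ℂ) • B)‖ = (1 - t) * ‖A - B‖ := by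
  have h : B - (((1 - t : ℝ) : ℂ) • A + ((t : ℝ) : ℂ) • B)
      = ((1 - t : ℝ) : ℂ) • (B - A) := by
    ext i j
    simp only [Matrix.sub_apply, Matrix.add_apply, Matrix.smul_apply, smul_eq_mul]
    push_cast
    ring
  rw [h, norm_smul, Complex.norm_real, Real.norm_eq_abs, abs_of_nonneg (by linarith),
    norm_sub_rev]


lemma bmat_herm {n g d : ℕ} {Γ : Fin d → Matrix (Fin g) (Fin g) ℂ}
    (hΓ : ∀ j, (Γ j).IsHermitian)
    {X : Fin d → Matrix (Fin n) (Fin n) ℂ} (hX : ∀ j, (X j).IsHermitian) :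
    (Bmat X Γ).IsHermitian := by
  unfold Bmat Matrix.IsHermitian
  rw [Matrix.conjTranspose_sum]
  apply Finset.sum_congr rfl
  intro j _
  ext ⟨i, k⟩ ⟨i', k'⟩
  simp only [Matrix.conjTranspose_apply, Matrix.kroneckerMap_apply, star_mul']
  have e1 : star (X j i' i) = (X j)ᴴ i i' := rfl
  have e2 : star (Γ j k' k) = (Γ j)ᴴ k k' := rfl
  rw [e1, e2, hX j, hΓ j]

lemma bmat_sub {n g d : ℕ} (Γ : Fin d → Matrix (Fin g) (Fin g) ℂ)
    (X Y : Fin d → Matrix (Fin n) (Fin n) ℂ) :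
    Bmat X Γ - Bmat Y Γ = Bmat (fun j => X j - Y j) Γ := by
  unfold Bmat
  rw [← Finset.sum_sub_distrib]
  apply Finset.sum_congr rfl
  intro j _
  ext ⟨i, k⟩ ⟨i', k'⟩
  simp only [Matrix.sub_apply, Matrix.kroneckerMap_apply, sub_mul]

lemma bmat_combo {n g d : ℕ} (Γ : Fin d → Matrix (Fin g) (Fin g) ℂ)
    (X Y : Fin d → Matrix (Fin n) (Fin n) ℂ) (t : ℝ) :
    Bmat (fun j => (1 - t) • X j + t • Y j) Γ
      = ((1 - t : ℝ) : ℂ) • Bmat X Γ + ((t : ℝ) : ℂ) • Bmat Y Γ := by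
  unfold Bmat
  ext ⟨i, k⟩ ⟨i', k'⟩
  simp only [Matrix.sum_apply, Matrix.add_apply, Matrix.smul_apply, Matrix.kroneckerMap_apply,
    smul_eq_mul, Finset.mul_sum]
  rw [← Finset.sum_add_distrib]
  apply Finset.sum_congr rfl
  intro j _
  simp only [Matrix.add_apply, Matrix.smul_apply, Complex.real_smul]
  push_cast
  ring

end Stmt17Aux

theorem stmt17 {d g n : ℕ}
    (Γ : Fin d → Matrix (Fin g) (Fin g) ℂ) (hΓ : IsCliffordFamily Γ)
    (X Y : Fin d → Matrix (Fin n) (Fin n) ℂ)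
    (hX : ∀ j, (X j).IsHermitian) (hY : ∀ j, (Y j).IsHermitian) :
    |‖(Bmat X Γ)⁻¹‖⁻¹ - ‖(Bmat Y Γ)⁻¹‖⁻¹| ≤ ‖Bmat (fun j => X j - Y j) Γ‖ ∧
      (IsUnit (Bmat X Γ) → IsUnit (Bmat Y Γ) → sig (Bmat X Γ) ≠ sig (Bmat Y Γ) →
        ‖(Bmat X Γ)⁻¹‖⁻¹ + ‖(Bmat Y Γ)⁻¹‖⁻¹ ≤ ‖Bmat (fun j => X j - Y j) Γ‖ ∧
          ∃ t ∈ Set.Icc (0 : ℝ) 1,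
            ¬ IsUnit (Bmat (fun j => (1 - t) • X j + t • Y j) Γ)) := by
  classical
  have hA : (Bmat X Γ).IsHermitian := Stmt17Aux.bmat_herm hΓ.1 hX
  have hB : (Bmat Y Γ).IsHermitian := Stmt17Aux.bmat_herm hΓ.1 hY
  have hsub : Bmat X Γ - Bmat Y Γ = Bmat (fun j => X j - Y j) Γ := Stmt17Aux.bmat_sub Γ X Y
  constructor
  · rw [abs_sub_le_iff]
    constructor
    · have h := Stmt17Aux.mu_le (A := Bmat X Γ) hB
      rw [hsub] at h
      linarith
    · have h := Stmt17Aux.mu_le (A := Bmat Y Γ) hA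
      have h2 : ‖Bmat Y Γ - Bmat X Γ‖ = ‖Bmat (fun j => X j - Y j) Γ‖ := by
        rw [norm_sub_rev, hsub]
      rw [h2] at h
      linarith
  · intro hUA hUB hsig
    rcases isEmpty_or_nonempty (Fin n × Fin g) with hm | hm
    · exact absurd (by rw [Stmt17Aux.sig_empty, Stmt17Aux.sig_empty] :
        sig (Bmat X Γ) = sig (Bmat Y Γ)) hsig
    · have key : ¬ (∀ t : ℝ, t ∈ Set.Icc (0:ℝ) 1 →
          IsUnit (((1 - t : ℝ) : ℂ) • Bmat X Γ + ((t : ℝ) : ℂ) • Bmat Y Γ)) :=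
        fun h => hsig (Stmt17Aux.sig_const_path hA hB h)
      constructor
      · by_contra hc
        push_neg at hc
        apply key
        intro t ht
        by_contra hnu
        set Ct := ((1 - t : ℝ) : ℂ) • Bmat X Γ + ((t : ℝ) : ℂ) • Bmat Y Γ with hCt
        have hhermt : Ct.IsHermitian :=
          (Stmt17Aux.herm_real_smul hA (1 - t)).add (Stmt17Aux.herm_real_smul hB t)
        have hz : ‖Ct⁻¹‖⁻¹ = 0 := by
          rw [Stmt17Aux.inv_eq_zero_of_not_isUnit hnu, norm_zero, _root_.inv_zero]
        have h1 : ‖(Bmat X Γ)⁻¹‖⁻¹ ≤ ‖Ct⁻¹‖⁻¹ + ‖Bmat X Γ - Ct‖ := Stmt17Aux.mu_le hhermt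
        have h2 : ‖(Bmat Y Γ)⁻¹‖⁻¹ ≤ ‖Ct⁻¹‖⁻¹ + ‖Bmat Y Γ - Ct‖ := Stmt17Aux.mu_le hhermt
        rw [hz, zero_add, hCt, Stmt17Aux.norm_sub_comb_left _ _ ht.1] at h1
        rw [hz, zero_add, hCt, Stmt17Aux.norm_sub_comb_right _ _ ht.2] at h2
        have hAB : ‖Bmat X Γ - Bmat Y Γ‖ = ‖Bmat (fun j => X j - Y j) Γ‖ := by rw [hsub]
        have hsplit : t * ‖Bmat X Γ - Bmat Y Γ‖ + (1 - t) * ‖Bmat X Γ - Bmat Y Γ‖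
            = ‖Bmat X Γ - Bmat Y Γ‖ := by ring
        linarith
      · by_contra hc
        push_neg at hc
        apply key
        intro t ht
        rw [← Stmt17Aux.bmat_combo]
        exact hc t ht
end

section
/- Let d ≥ 2, let Γ₁, …, Γ_d ∈ M_g(ℂ) be Hermitian matrices satisfying the Clifford relations, and let X₁, …, X_d ∈ M_n(ℂ) be Hermitian. If λ ∈ ℝ^d satisfies √(Σ_j λ_j²) > ‖B(X₁,…,X_d)‖, then B_λ(X₁,…,X_d) is invertible and Sig(B_λ(X₁,…,X_d)) = 0. -/
open Matrix
open scoped Kronecker Matrix.Norms.L2Operator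

section Aux

variable {m : Type*} [Fintype m] [DecidableEq m]

lemma aux_eig_apply {Q : Matrix m m ℂ} (hQ : Q.IsHermitian) (i : m) :
    Matrix.toEuclideanLin Q (hQ.eigenvectorBasis i) =
      (hQ.eigenvalues i : ℂ) • hQ.eigenvectorBasis i := by
  ext j
  have h2 := congrFun (hQ.mulVec_eigenvectorBasis i) j
  show (Q *ᵥ ⇑(hQ.eigenvectorBasis i)) j = ((hQ.eigenvalues i : ℂ) • hQ.eigenvectorBasis i) j
  rw [h2]
  simp [PiLp.smul_apply, Complex.real_smul]

lemma aux_repr_toEuclideanLin {Q : Matrix m m ℂ} (hQ : Q.IsHermitian)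
    (v : EuclideanSpace ℂ m) (i : m) :
    hQ.eigenvectorBasis.repr (Matrix.toEuclideanLin Q v) i =
      (hQ.eigenvalues i : ℂ) * hQ.eigenvectorBasis.repr v i := by
  rw [OrthonormalBasis.repr_apply_apply, OrthonormalBasis.repr_apply_apply,
    ← (Matrix.isHermitian_iff_isSymmetric.1 hQ) (hQ.eigenvectorBasis i) v,
    aux_eig_apply hQ i, inner_smul_left]
  simp

lemma aux_quad_form {Q : Matrix m m ℂ} (hQ : Q.IsHermitian) (v : EuclideanSpace ℂ m) :
    (inner ℂ v (Matrix.toEuclideanLin Q v) : ℂ).re =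
      ∑ i, hQ.eigenvalues i * Complex.normSq (hQ.eigenvectorBasis.repr v i) := by
  rw [← LinearIsometryEquiv.inner_map_map hQ.eigenvectorBasis.repr v
    (Matrix.toEuclideanLin Q v), PiLp.inner_apply]
  rw [Complex.re_sum]
  refine Finset.sum_congr rfl fun i _ => ?_
  rw [RCLike.inner_apply, aux_repr_toEuclideanLin hQ v i, mul_assoc, Complex.mul_conj']
  rw [show ((‖hQ.eigenvectorBasis.repr v i‖ : ℂ) ^ 2
      = ((‖hQ.eigenvectorBasis.repr v i‖ ^ 2 : ℝ) : ℂ)) by push_cast; ring]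
  rw [← Complex.ofReal_mul, Complex.ofReal_re, Complex.normSq_eq_norm_sq]

omit [DecidableEq m] in
lemma aux_repr_eq_zero_of_mem_span (b : OrthonormalBasis m ℂ (EuclideanSpace ℂ m)) (S : Set m)
    {v : EuclideanSpace ℂ m} (hv : v ∈ Submodule.span ℂ (b '' S)) {i : m} (hi : i ∉ S) :
    b.repr v i = 0 := by
  rw [OrthonormalBasis.repr_apply_apply]
  induction hv using Submodule.span_induction with
  | mem w hw =>
      obtain ⟨j, hj, rfl⟩ := hw
      exact b.orthonormal.2 (fun hij => hi (hij ▸ hj))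
  | zero => exact inner_zero_right _
  | add x y _ _ hx hy => rw [inner_add_right, hx, hy, add_zero]
  | smul c x _ hx => rw [inner_smul_right, hx, mul_zero]

omit [DecidableEq m] in
lemma aux_span_rank (b : OrthonormalBasis m ℂ (EuclideanSpace ℂ m)) (S : Finset m) :
    Module.finrank ℂ (Submodule.span ℂ (b '' (S : Set m))) = S.card := by
  have li : LinearIndependent ℂ (fun i : (S : Set m) => b i) :=
    b.orthonormal.linearIndependent.comp _ Subtype.val_injective
  rw [show (b '' (S : Set m)) = Set.range (fun i : (S : Set m) => b i) by
    rw [Set.image_eq_range]]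
  rw [finrank_span_eq_card li]
  simp

lemma aux_card_sign_ge {Q : Matrix m m ℂ} (hQ : Q.IsHermitian)
    (W : Submodule ℂ (EuclideanSpace ℂ m))
    (p : ℝ → Prop) [DecidablePred p] (hp : ∀ x : ℝ, ¬ p x → x ≤ 0)
    (h : ∀ v ∈ W, v ≠ 0 → 0 < (inner ℂ v (Matrix.toEuclideanLin Q v) : ℂ).re) :
    Module.finrank ℂ W ≤ (Finset.univ.filter fun i => p (hQ.eigenvalues i)).card := by
  classical
  set b := hQ.eigenvectorBasis with hb
  set S : Finset m := Finset.univ.filter (fun i => ¬ p (hQ.eigenvalues i)) with hS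
  set N := Submodule.span ℂ (b '' (S : Set m)) with hN
  have hWN : W ⊓ N = ⊥ := by
    rw [Submodule.eq_bot_iff]
    rintro v ⟨hvW, hvN⟩
    by_contra hv0
    have h1 := h v hvW hv0
    have h2 : (inner ℂ v (Matrix.toEuclideanLin Q v) : ℂ).re ≤ 0 := by
      rw [aux_quad_form hQ v]
      apply Finset.sum_nonpos
      intro i _
      by_cases hiS : i ∈ S
      · exact mul_nonpos_iff.2 (Or.inr ⟨hp _ (Finset.mem_filter.1 hiS).2,
          Complex.normSq_nonneg _⟩)
      · rw [aux_repr_eq_zero_of_mem_span b (S : Set m) hvN (by simpa using hiS)]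
        simp
    linarith
  have key := Submodule.finrank_sup_add_finrank_inf_eq W N
  rw [hWN] at key
  have hle : Module.finrank ℂ ↥(W ⊔ N) ≤ Fintype.card m := by
    have := Submodule.finrank_le (W ⊔ N)
    rwa [finrank_euclideanSpace] at this
  have hcards := Finset.card_filter_add_card_filter_not
    (s := (Finset.univ : Finset m)) (p := fun i => p (hQ.eigenvalues i))
  rw [aux_span_rank b S] at key
  simp only [hS, finrank_bot, add_zero] at key
  simp only [Finset.card_univ] at hcards
  omega

lemma aux_card_sign_le {Q : Matrix m m ℂ} (hQ : Q.IsHermitian)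
    (W : Submodule ℂ (EuclideanSpace ℂ m))
    (p : ℝ → Prop) [DecidablePred p] (hp : ∀ x : ℝ, ¬ p x → 0 ≤ x)
    (h : ∀ v ∈ W, v ≠ 0 → (inner ℂ v (Matrix.toEuclideanLin Q v) : ℂ).re < 0) :
    Module.finrank ℂ W ≤ (Finset.univ.filter fun i => p (hQ.eigenvalues i)).card := by
  classical
  set b := hQ.eigenvectorBasis with hb
  set S : Finset m := Finset.univ.filter (fun i => ¬ p (hQ.eigenvalues i)) with hS
  set N := Submodule.span ℂ (b '' (S : Set m)) with hN
  have hWN : W ⊓ N = ⊥ := by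
    rw [Submodule.eq_bot_iff]
    rintro v ⟨hvW, hvN⟩
    by_contra hv0
    have h1 := h v hvW hv0
    have h2 : 0 ≤ (inner ℂ v (Matrix.toEuclideanLin Q v) : ℂ).re := by
      rw [aux_quad_form hQ v]
      apply Finset.sum_nonneg
      intro i _
      by_cases hiS : i ∈ S
      · exact mul_nonneg (hp _ (Finset.mem_filter.1 hiS).2) (Complex.normSq_nonneg _)
      · rw [aux_repr_eq_zero_of_mem_span b (S : Set m) hvN (by simpa using hiS)]
        simp
    linarith
  have key := Submodule.finrank_sup_add_finrank_inf_eq W N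
  rw [hWN] at key
  have hle : Module.finrank ℂ ↥(W ⊔ N) ≤ Fintype.card m := by
    have := Submodule.finrank_le (W ⊔ N)
    rwa [finrank_euclideanSpace] at this
  have hcards := Finset.card_filter_add_card_filter_not
    (s := (Finset.univ : Finset m)) (p := fun i => p (hQ.eigenvalues i))
  rw [aux_span_rank b S] at key
  simp only [hS, finrank_bot, add_zero] at key
  simp only [Finset.card_univ] at hcards
  omega

lemma aux_sum_sum_eq_diag {M : Type*} [AddCommGroup M] [Module ℂ M] {d : ℕ}
    (f : Fin d → Fin d → M) (hf : ∀ j k, j ≠ k → f j k = - f k j) :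
    ∑ j, ∑ k, f j k = ∑ j, f j j := by
  classical
  have h1 : ∑ j, ∑ k, f j k = ∑ p ∈ Finset.univ ×ˢ Finset.univ, f p.1 p.2 := by
    rw [Finset.sum_product]
  have h2 : (Finset.univ : Finset (Fin d)).diag ∪ (Finset.univ : Finset (Fin d)).offDiag
      = Finset.univ ×ˢ Finset.univ := Finset.diag_union_offDiag _
  have hdisj : Disjoint (Finset.univ : Finset (Fin d)).diag
      (Finset.univ : Finset (Fin d)).offDiag := Finset.disjoint_diag_offDiag _
  have h3 : ∑ p ∈ Finset.univ ×ˢ Finset.univ, f p.1 p.2 =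
      (∑ p ∈ (Finset.univ : Finset (Fin d)).diag, f p.1 p.2) +
      ∑ p ∈ (Finset.univ : Finset (Fin d)).offDiag, f p.1 p.2 := by
    rw [← Finset.sum_union hdisj, h2]
  have h4 : ∑ p ∈ (Finset.univ : Finset (Fin d)).diag, f p.1 p.2 = ∑ j, f j j :=
    Finset.sum_diag _ _
  have h5 : ∑ p ∈ (Finset.univ : Finset (Fin d)).offDiag, f p.1 p.2 = 0 := by
    have hswap : ∑ p ∈ (Finset.univ : Finset (Fin d)).offDiag, f p.1 p.2 =
        ∑ p ∈ (Finset.univ : Finset (Fin d)).offDiag, f p.2 p.1 := by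
      apply Finset.sum_nbij' (fun p => (p.2, p.1)) (fun p => (p.2, p.1)) <;>
        simp +contextual [Finset.mem_offDiag, eq_comm, ne_comm]
    have hTT : (∑ p ∈ (Finset.univ : Finset (Fin d)).offDiag, f p.1 p.2) +
        ∑ p ∈ (Finset.univ : Finset (Fin d)).offDiag, f p.1 p.2 = 0 := by
      nth_rewrite 2 [hswap]
      rw [← Finset.sum_add_distrib]
      apply Finset.sum_eq_zero
      intro p hp
      rw [hf p.1 p.2 (Finset.mem_offDiag.1 hp).2.2]
      abel
    have h2T : (2 : ℂ) • (∑ p ∈ (Finset.univ : Finset (Fin d)).offDiag, f p.1 p.2) = 0 := by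
      rw [two_smul]; exact hTT
    simpa using (smul_eq_zero.1 h2T).resolve_left (by norm_num)
  rw [h1, h3, h4, h5, add_zero]

end Aux

lemma aux_trace_gamma {g d : ℕ} (hd : 2 ≤ d) (Γ : Fin d → Matrix (Fin g) (Fin g) ℂ)
    (hΓ : IsCliffordFamily Γ) (j : Fin d) : (Γ j).trace = 0 := by
  obtain ⟨h1, h2, h3⟩ := hΓ
  obtain ⟨k, hk⟩ : ∃ k, k ≠ j := by
    rcases eq_or_ne j ⟨0, by omega⟩ with rfl | hj
    · exact ⟨⟨1, by omega⟩, by simp [Fin.ext_iff]⟩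
    · exact ⟨⟨0, by omega⟩, fun h => hj h.symm⟩
  have key : (Γ j).trace = -(Γ j).trace := by
    calc (Γ j).trace = (Γ j * (Γ k * Γ k)).trace := by rw [h2 k, mul_one]
    _ = ((Γ j * Γ k) * Γ k).trace := by rw [mul_assoc]
    _ = (-(Γ k * Γ j) * Γ k).trace := by rw [h3 j k hk.symm]
    _ = -((Γ k * (Γ j * Γ k)).trace) := by rw [neg_mul, trace_neg, mul_assoc]
    _ = -(((Γ j * Γ k) * Γ k).trace) := by rw [trace_mul_comm]
    _ = -((Γ j).trace) := by rw [mul_assoc, h2 k, mul_one]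
  have h2t : (2 : ℂ) * (Γ j).trace = 0 := by rw [two_mul]; nth_rewrite 1 [key]; ring
  simpa using (mul_eq_zero.1 h2t).resolve_left (by norm_num)

lemma aux_C_mul_C {g d : ℕ} (Γ : Fin d → Matrix (Fin g) (Fin g) ℂ)
    (hΓ : IsCliffordFamily Γ) (lam : Fin d → ℝ) :
    (∑ j, (lam j : ℂ) • Γ j) * (∑ j, (lam j : ℂ) • Γ j)
      = ((∑ j, lam j ^ 2 : ℝ) : ℂ) • 1 := by
  obtain ⟨h1, h2, h3⟩ := hΓ
  rw [Finset.sum_mul_sum]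
  have hsm : ∀ j k : Fin d, ((lam j : ℂ) • Γ j) * ((lam k : ℂ) • Γ k)
      = ((lam j : ℂ) * lam k) • (Γ j * Γ k) := by
    intro j k
    rw [smul_mul_assoc, mul_smul_comm, smul_smul]
  simp_rw [hsm]
  rw [aux_sum_sum_eq_diag (fun j k => ((lam j : ℂ) * lam k) • (Γ j * Γ k))
    (fun j k hjk => by
      rw [h3 j k hjk, smul_neg, mul_comm ((lam j : ℂ)) ((lam k : ℂ))])]
  simp_rw [h2]
  rw [← Finset.sum_smul]
  congr 1
  push_cast
  ring_nf

lemma aux_herm_sum {m : Type*} [Fintype m] {d : ℕ} {F : Fin d → Matrix m m ℂ}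
    (h : ∀ j, (F j).IsHermitian) : (∑ j, F j).IsHermitian := by
  unfold Matrix.IsHermitian
  rw [conjTranspose_sum]
  exact Finset.sum_congr rfl fun j _ => h j

lemma aux_kron_conjTranspose {n g : ℕ} (A : Matrix (Fin n) (Fin n) ℂ)
    (B : Matrix (Fin g) (Fin g) ℂ) : (A ⊗ₖ B)ᴴ = Aᴴ ⊗ₖ Bᴴ := by
  ext ⟨i, k⟩ ⟨i', k'⟩
  simp [conjTranspose_apply, kroneckerMap_apply, mul_comm]

lemma aux_Blam_eq {n g d : ℕ} (X : Fin d → Matrix (Fin n) (Fin n) ℂ)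
    (Γ : Fin d → Matrix (Fin g) (Fin g) ℂ) (lam : Fin d → ℝ) :
    Blam X Γ lam = Bmat X Γ - (1 : Matrix (Fin n) (Fin n) ℂ) ⊗ₖ (∑ j, (lam j : ℂ) • Γ j) := by
  ext ⟨i, k⟩ ⟨i', k'⟩
  simp only [Blam, Bmat, Matrix.sub_apply, Matrix.sum_apply, kroneckerMap_apply, sub_mul,
    Finset.sum_sub_distrib, Matrix.smul_apply, one_apply, smul_eq_mul, Finset.mul_sum]
  congr 1
  refine Finset.sum_congr rfl fun j _ => ?_
  ring

set_option maxHeartbeats 2000000 in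
theorem stmt18 {d g n : ℕ} (hd : 2 ≤ d)
    (Γ : Fin d → Matrix (Fin g) (Fin g) ℂ) (hΓ : IsCliffordFamily Γ)
    (X : Fin d → Matrix (Fin n) (Fin n) ℂ) (hX : ∀ j, (X j).IsHermitian)
    (lam : Fin d → ℝ) (hlam : Real.sqrt (∑ j, lam j ^ 2) > ‖Bmat X Γ‖) :
    IsUnit (Blam X Γ lam) ∧ sig (Blam X Γ lam) = 0 := by
  classical
  obtain ⟨hΓ1, hΓ2, hΓ3⟩ := hΓ
  set r : ℝ := Real.sqrt (∑ j, lam j ^ 2) with hr_def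
  have hr_pos : 0 < r := lt_of_le_of_lt (norm_nonneg _) hlam
  have hr_sq : r ^ 2 = ∑ j, lam j ^ 2 := by
    rw [hr_def, Real.sq_sqrt]
    exact Finset.sum_nonneg fun j _ => sq_nonneg _
  set A : Matrix (Fin n × Fin g) (Fin n × Fin g) ℂ := Bmat X Γ with hA_def
  set C : Matrix (Fin g) (Fin g) ℂ := ∑ j, (lam j : ℂ) • Γ j with hC_def
  set D : Matrix (Fin n × Fin g) (Fin n × Fin g) ℂ := (1 : Matrix (Fin n) (Fin n) ℂ) ⊗ₖ C
    with hD_def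
  have hBlam : Blam X Γ lam = A - D := aux_Blam_eq X Γ lam
  -- Hermiticity
  have hC_herm : C.IsHermitian := by
    apply aux_herm_sum
    intro j
    unfold Matrix.IsHermitian
    rw [conjTranspose_smul, hΓ1 j]
    simp
  have hA_herm : A.IsHermitian := by
    apply aux_herm_sum
    intro j
    unfold Matrix.IsHermitian
    rw [aux_kron_conjTranspose, (hX j), (hΓ1 j)]
  have hD_herm : D.IsHermitian := by
    unfold Matrix.IsHermitian
    rw [hD_def, aux_kron_conjTranspose, hC_herm, conjTranspose_one]
  have hQ_herm : (Blam X Γ lam).IsHermitian := by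
    rw [hBlam]
    exact hA_herm.sub hD_herm
  -- algebra of D
  have hC2 : C * C = ((r ^ 2 : ℝ) : ℂ) • 1 := by
    rw [hC_def, aux_C_mul_C Γ ⟨hΓ1, hΓ2, hΓ3⟩ lam, hr_sq]
  have hD2 : D * D = ((r ^ 2 : ℝ) : ℂ) • (1 : Matrix (Fin n × Fin g) (Fin n × Fin g) ℂ) := by
    rw [hD_def, ← mul_kronecker_mul, one_mul, hC2, kronecker_smul, one_kronecker_one]
  have hC_tr : C.trace = 0 := by
    rw [hC_def, trace_sum]
    refine Finset.sum_eq_zero fun j _ => ?_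
    rw [trace_smul, aux_trace_gamma hd Γ ⟨hΓ1, hΓ2, hΓ3⟩ j, smul_zero]
  have hD_tr : D.trace = 0 := by
    rw [hD_def, trace_kronecker, hC_tr, mul_zero]
  -- Euclidean linear maps
  have hDlin : ∀ v : EuclideanSpace ℂ (Fin n × Fin g),
      Matrix.toEuclideanLin D (Matrix.toEuclideanLin D v) = ((r ^ 2 : ℝ) : ℂ) • v := by
    intro v
    have : Matrix.toEuclideanLin (D * D) v
        = Matrix.toEuclideanLin D (Matrix.toEuclideanLin D v) := by
      ext i
      show ((D * D) *ᵥ v.ofLp) i = (D *ᵥ (D *ᵥ v.ofLp)) i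
      rw [mulVec_mulVec]
    rw [← this, hD2]
    ext i
    show ((((r ^ 2 : ℝ) : ℂ) • (1 : Matrix (Fin n × Fin g) (Fin n × Fin g) ℂ)) *ᵥ v.ofLp) i
      = (((r ^ 2 : ℝ) : ℂ) • v) i
    rw [smul_mulVec, one_mulVec]
    rfl

  have hDnorm : ∀ v : EuclideanSpace ℂ (Fin n × Fin g),
      ‖Matrix.toEuclideanLin D v‖ ^ 2 = r ^ 2 * ‖v‖ ^ 2 := by
    intro v
    have h1 : ((inner ℂ (Matrix.toEuclideanLin D v) (Matrix.toEuclideanLin D v)) : ℂ)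
        = ((‖Matrix.toEuclideanLin D v‖ ^ 2 : ℝ) : ℂ) := by
      rw [inner_self_eq_norm_sq_to_K]
      norm_cast
    have h2 : ((inner ℂ (Matrix.toEuclideanLin D v) (Matrix.toEuclideanLin D v)) : ℂ)
        = inner ℂ v (Matrix.toEuclideanLin D (Matrix.toEuclideanLin D v)) :=
      (Matrix.isHermitian_iff_isSymmetric.1 hD_herm) _ _
    rw [hDlin v, inner_smul_right] at h2
    have h3 : ((inner ℂ v v) : ℂ) = ((‖v‖ ^ 2 : ℝ) : ℂ) := by
      rw [inner_self_eq_norm_sq_to_K]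
      norm_cast
    rw [h3] at h2
    rw [h1] at h2
    have := congrArg Complex.re h2
    rw [Complex.ofReal_re, ← Complex.ofReal_mul, Complex.ofReal_re] at this
    exact this
  have hAnorm : ∀ v : EuclideanSpace ℂ (Fin n × Fin g),
      ‖Matrix.toEuclideanLin A v‖ ≤ ‖A‖ * ‖v‖ := by
    intro v
    exact ((Matrix.toEuclideanLin.trans LinearMap.toContinuousLinearMap) A).le_opNorm v
  -- injectivity
  have hker : ∀ v : (Fin n × Fin g) → ℂ, (Blam X Γ lam) *ᵥ v = 0 → v = 0 := by
    intro v hv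
    rw [hBlam, sub_mulVec, sub_eq_zero] at hv
    set w : EuclideanSpace ℂ (Fin n × Fin g) := WithLp.toLp 2 v with hw_def
    have heq : Matrix.toEuclideanLin A w = Matrix.toEuclideanLin D w := by
      ext i
      show (A *ᵥ v) i = (D *ᵥ v) i
      rw [hv]
    by_contra hv0
    have hw0 : w ≠ 0 := fun h => hv0 (by rw [hw_def] at h; simpa using congrArg WithLp.ofLp h)
    have hwpos : 0 < ‖w‖ := norm_pos_iff.2 hw0
    have h1 : ‖Matrix.toEuclideanLin A w‖ ^ 2 = r ^ 2 * ‖w‖ ^ 2 := by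
      rw [heq]; exact hDnorm w
    have h2 : ‖Matrix.toEuclideanLin A w‖ ≤ ‖A‖ * ‖w‖ := hAnorm w
    have h3 : 0 ≤ ‖Matrix.toEuclideanLin A w‖ := norm_nonneg _
    have h4 : ‖Matrix.toEuclideanLin A w‖ ^ 2 ≤ (‖A‖ * ‖w‖) ^ 2 := by
      apply pow_le_pow_left₀ h3 h2
    have h5 : r ^ 2 * ‖w‖ ^ 2 ≤ ‖A‖ ^ 2 * ‖w‖ ^ 2 := by nlinarith
    have h6 : r ^ 2 ≤ ‖A‖ ^ 2 :=
      le_of_mul_le_mul_right h5 (by positivity)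
    have h7 : ‖A‖ ^ 2 < r ^ 2 := by
      apply pow_lt_pow_left₀ hlam (norm_nonneg A)
      norm_num
    linarith
  have hinj : Function.Injective ((Blam X Γ lam).mulVec) := by
    intro x y hxy
    have := hker (x - y) (by rw [mulVec_sub, hxy, sub_self])
    exact sub_eq_zero.1 this
  have hUnit : IsUnit (Blam X Γ lam) := Matrix.mulVec_injective_iff_isUnit.1 hinj
  refine ⟨hUnit, ?_⟩
  -- eigenvalues of Blam
  have hμ0 : ∀ i, hQ_herm.eigenvalues i ≠ 0 := by
    intro i h0
    have hbv := hQ_herm.mulVec_eigenvectorBasis i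
    rw [h0, zero_smul] at hbv
    have hz : ⇑(hQ_herm.eigenvectorBasis i) = (0 : (Fin n × Fin g) → ℂ) := by
      apply hinj
      show (Blam X Γ lam) *ᵥ ⇑(hQ_herm.eigenvectorBasis i) = (Blam X Γ lam) *ᵥ 0
      rw [mulVec_zero, hbv]
    exact hQ_herm.eigenvectorBasis.orthonormal.ne_zero i (by ext j; exact congrFun hz j)
  -- eigenvalues of D
  have hν : ∀ i, hD_herm.eigenvalues i = r ∨ hD_herm.eigenvalues i = -r := by
    intro i
    have e1 : Matrix.toEuclideanLin D (Matrix.toEuclideanLin D (hD_herm.eigenvectorBasis i))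
        = (((hD_herm.eigenvalues i : ℂ)) ^ 2) • hD_herm.eigenvectorBasis i := by
      rw [aux_eig_apply hD_herm i, _root_.map_smul, aux_eig_apply hD_herm i, smul_smul, sq]
    rw [hDlin] at e1
    have e2 : ((((r ^ 2 : ℝ) : ℂ)) - ((hD_herm.eigenvalues i : ℂ)) ^ 2) • hD_herm.eigenvectorBasis i = 0 := by
      rw [sub_smul, e1, sub_self]
    have e3 := (smul_eq_zero.1 e2).resolve_right
      (hD_herm.eigenvectorBasis.orthonormal.ne_zero i)
    have e4 : (hD_herm.eigenvalues i) ^ 2 = r ^ 2 := by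
      have e5 : ((r ^ 2 - (hD_herm.eigenvalues i) ^ 2 : ℝ) : ℂ) = 0 := by
        have e3' := e3
        push_cast at e3' ⊢
        linear_combination e3'
      have e6 : r ^ 2 - (hD_herm.eigenvalues i) ^ 2 = 0 := by exact_mod_cast e5
      linarith
    rcases sq_eq_sq_iff_eq_or_eq_neg.1 e4 with h | h
    · exact Or.inl h
    · exact Or.inr h
  -- trace of D equals sum of its eigenvalues
  have htr_sum : D.trace = ∑ i, ((hD_herm.eigenvalues i : ℂ)) := by
    exact hD_herm.trace_eq_sum_eigenvalues
  have hνsum : ∑ i, hD_herm.eigenvalues i = 0 := by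
    have : ((∑ i, hD_herm.eigenvalues i : ℝ) : ℂ) = 0 := by
      push_cast
      rw [← htr_sum, hD_tr]
    exact_mod_cast this
  -- counts of D-eigenvalues
  set a : ℕ := (Finset.univ.filter fun i => hD_herm.eigenvalues i = -r).card with ha_def
  set b' : ℕ := (Finset.univ.filter fun i => hD_herm.eigenvalues i = r).card with hb_def
  have hrne : r ≠ -r := by intro h; nlinarith
  have hfilter_eq : (Finset.univ.filter fun i => ¬ hD_herm.eigenvalues i = r) =
      (Finset.univ.filter fun i => hD_herm.eigenvalues i = -r) := by
    apply Finset.filter_congr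
    intro i _
    rcases hν i with h | h <;> simp [h, hrne, Ne.symm hrne]
  have hab : b' + a = Fintype.card (Fin n × Fin g) := by
    have := Finset.card_filter_add_card_filter_not
      (s := (Finset.univ : Finset (Fin n × Fin g))) (p := fun i => hD_herm.eigenvalues i = r)
    rw [hfilter_eq] at this
    simpa [Finset.card_univ] using this
  have hsum_split : ∑ i, hD_herm.eigenvalues i = r * b' - r * a := by
    rw [← Finset.sum_filter_add_sum_filter_not Finset.univ (fun i => hD_herm.eigenvalues i = r)]
    rw [hfilter_eq]
    have e1 : ∑ i ∈ Finset.univ.filter (fun i => hD_herm.eigenvalues i = r), hD_herm.eigenvalues i = b' * r := by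
      rw [Finset.sum_congr rfl (fun i hi => (Finset.mem_filter.1 hi).2)]
      rw [Finset.sum_const, nsmul_eq_mul]
    have e2 : ∑ i ∈ Finset.univ.filter (fun i => hD_herm.eigenvalues i = -r), hD_herm.eigenvalues i = a * (-r) := by
      rw [Finset.sum_congr rfl (fun i hi => (Finset.mem_filter.1 hi).2)]
      rw [Finset.sum_const, nsmul_eq_mul]
    rw [e1, e2]
    ring
  have hab_eq : a = b' := by
    have : r * (b' : ℝ) - r * a = 0 := by rw [← hsum_split, hνsum]
    have h2 : (a : ℝ) = b' := by
      have := mul_left_cancel₀ (ne_of_gt hr_pos) (show r * (a:ℝ) = r * b' by linarith)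
      linarith
    exact_mod_cast h2
  -- subspace on which the form is positive
  -- common facts
  have hBlam_lin : ∀ v : EuclideanSpace ℂ (Fin n × Fin g),
      Matrix.toEuclideanLin (Blam X Γ lam) v
        = Matrix.toEuclideanLin A v - Matrix.toEuclideanLin D v := by
    intro v
    rw [hBlam, map_sub]
    rfl
  have habs : ∀ v : EuclideanSpace ℂ (Fin n × Fin g),
      |(inner ℂ v (Matrix.toEuclideanLin A v) : ℂ).re| ≤ ‖A‖ * ‖v‖ ^ 2 := by
    intro v
    have h1 : |(inner ℂ v (Matrix.toEuclideanLin A v) : ℂ).re|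
        ≤ ‖(inner ℂ v (Matrix.toEuclideanLin A v) : ℂ)‖ := Complex.abs_re_le_norm _
    have h2 : ‖(inner ℂ v (Matrix.toEuclideanLin A v) : ℂ)‖
        ≤ ‖v‖ * ‖Matrix.toEuclideanLin A v‖ := norm_inner_le_norm _ _
    have h3 := hAnorm v
    have h4 : (0:ℝ) ≤ ‖v‖ := norm_nonneg _
    nlinarith
  have hDv_form : ∀ (s : ℝ) (v : EuclideanSpace ℂ (Fin n × Fin g)),
      Matrix.toEuclideanLin D v = ((s:ℂ)) • v →
      (inner ℂ v (Matrix.toEuclideanLin (Blam X Γ lam) v) : ℂ).re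
        = (inner ℂ v (Matrix.toEuclideanLin A v) : ℂ).re - s * ‖v‖ ^ 2 := by
    intro s v hDv
    rw [hBlam_lin v, inner_sub_right, hDv, inner_smul_right, inner_self_eq_norm_sq_to_K]
    simp [Complex.sub_re, Complex.mul_re]
    left
    rw [← Complex.ofReal_pow, Complex.ofReal_re]
  -- eigenvector subspaces of D
  have hspan_prop : ∀ (s : ℝ), ∀ v ∈ Submodule.span ℂ
      (hD_herm.eigenvectorBasis '' ((Finset.univ.filter fun i => hD_herm.eigenvalues i = s) : Set (Fin n × Fin g))),
      Matrix.toEuclideanLin D v = ((s:ℂ)) • v := by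
    intro s v hv
    have hle : Submodule.span ℂ
        (hD_herm.eigenvectorBasis '' ((Finset.univ.filter fun i => hD_herm.eigenvalues i = s) :
          Set (Fin n × Fin g)))
        ≤ LinearMap.ker (Matrix.toEuclideanLin D - (s:ℂ) • LinearMap.id) := by
      rw [Submodule.span_le]
      rintro _ ⟨i, hi, rfl⟩
      have hiν : hD_herm.eigenvalues i = s := by
        have := Finset.mem_coe.1 hi
        exact (Finset.mem_filter.1 this).2
      simp only [SetLike.mem_coe, LinearMap.mem_ker, LinearMap.sub_apply, LinearMap.smul_apply,
        LinearMap.id_apply]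
      rw [aux_eig_apply hD_herm i, hiν]
      rw [sub_self]
    have := hle hv
    rw [LinearMap.mem_ker, LinearMap.sub_apply, LinearMap.smul_apply, LinearMap.id_apply,
      sub_eq_zero] at this
    exact this
  -- positive count
  have haP : a ≤ (Finset.univ.filter fun i => 0 < hQ_herm.eigenvalues i).card := by
    have := aux_card_sign_ge hQ_herm
      (Submodule.span ℂ (hD_herm.eigenvectorBasis ''
        ((Finset.univ.filter fun i => hD_herm.eigenvalues i = -r) : Set (Fin n × Fin g))))
      (fun x => 0 < x) (fun x hx => not_lt.1 hx) ?_
    · rwa [aux_span_rank] at this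
    · intro v hv hv0
      have hDv := hspan_prop (-r) v hv
      have := hDv_form (-r) v hDv
      rw [this]
      have hvpos : 0 < ‖v‖ := norm_pos_iff.2 hv0
      have h3 : ‖A‖ < r := hlam
      have h4 := (abs_le.1 (habs v)).1
      have h5 := mul_lt_mul_of_pos_right h3 (pow_pos hvpos 2)
      linarith
  -- negative count
  have hbN : b' ≤ (Finset.univ.filter fun i => hQ_herm.eigenvalues i < 0).card := by
    have := aux_card_sign_le hQ_herm
      (Submodule.span ℂ (hD_herm.eigenvectorBasis ''
        ((Finset.univ.filter fun i => hD_herm.eigenvalues i = r) : Set (Fin n × Fin g))))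
      (fun x => x < 0) (fun x hx => not_lt.1 hx) ?_
    · rwa [aux_span_rank] at this
    · intro v hv hv0
      have hDv := hspan_prop r v hv
      have := hDv_form r v hDv
      rw [this]
      have hvpos : 0 < ‖v‖ := norm_pos_iff.2 hv0
      have h3 : ‖A‖ < r := hlam
      have h4 := (abs_le.1 (habs v)).2
      have h5 := mul_lt_mul_of_pos_right h3 (pow_pos hvpos 2)
      linarith
  -- total counts
  have hPN : (Finset.univ.filter fun i => 0 < hQ_herm.eigenvalues i).card
      + (Finset.univ.filter fun i => hQ_herm.eigenvalues i < 0).card = Fintype.card (Fin n × Fin g) := by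
    have heqf : (Finset.univ.filter fun i => ¬ 0 < hQ_herm.eigenvalues i) =
        (Finset.univ.filter fun i => hQ_herm.eigenvalues i < 0) := by
      apply Finset.filter_congr
      intro i _
      constructor
      · intro h
        exact lt_of_le_of_ne (not_lt.1 h) (hμ0 i)
      · intro h
        exact not_lt.2 (le_of_lt h)
    have := Finset.card_filter_add_card_filter_not
      (s := (Finset.univ : Finset (Fin n × Fin g))) (p := fun i => 0 < hQ_herm.eigenvalues i)
    rw [heqf] at this
    simpa [Finset.card_univ] using this
  -- conclude
  unfold sig
  rw [dif_pos hQ_herm]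
  have hfinal : (Finset.univ.filter fun i => 0 < hQ_herm.eigenvalues i).card
      = (Finset.univ.filter fun i => hQ_herm.eigenvalues i < 0).card := by omega
  omega
end
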